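/- arXiv:2103.09089 — 4 statements merged into one kernel-verified Lean document; each statement's English description precedes it below -/
import Mathlib

section
/- (Rota–Strang) For every bounded subset S of M_d(ℂ), the joint spectral radius ρ(S) equals the infimum of ‖S‖ over all norms ‖·‖ on ℂ^d (where ‖·‖ also denotes the induced operator norm). Concretely, for every r > 0 with r·ρ(S) < 1, the function v_r(x) := Σ_{n≥0} ‖Sⁿx‖ rⁿ is a norm on ℂ^d satisfying v_r(sx) ≤ r⁻¹ v_r(x) for all s ∈ S. -/
open scoped Pointwise
open Filter

/-- A norm on `ℂ^d`, given as a plain function with the norm axioms. -/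
def IsCNorm {d : ℕ} (v : (Fin d → ℂ) → ℝ) : Prop :=
  (∀ x, 0 ≤ v x) ∧ (∀ x, v x = 0 ↔ x = 0) ∧
  (∀ (a : ℂ) (x), v (a • x) = ‖a‖ * v x) ∧ (∀ x y, v (x + y) ≤ v x + v y)

/-- Operator norm on matrices induced by the norm `v` on `ℂ^d`. -/
noncomputable def opNorm {d : ℕ} (v : (Fin d → ℂ) → ℝ) (A : Matrix (Fin d) (Fin d) ℂ) : ℝ :=
  sSup {c : ℝ | ∃ x : Fin d → ℂ, v x ≤ 1 ∧ c = v (A.mulVec x)}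

/-- Norm of a set of matrices: `sup_{s ∈ S} ‖s‖`. -/
noncomputable def setOpNorm {d : ℕ} (v : (Fin d → ℂ) → ℝ)
    (S : Set (Matrix (Fin d) (Fin d) ℂ)) : ℝ :=
  sSup (opNorm v '' S)

/-- The sup norm on `ℂ^d`, used as reference norm to define the joint spectral radius. -/
noncomputable def stdNorm {d : ℕ} (x : Fin d → ℂ) : ℝ := ‖x‖

/-- The joint spectral radius `ρ(S) = inf_{n ≥ 1} ‖Sⁿ‖^{1/n}`. -/
noncomputable def jsr {d : ℕ} (S : Set (Matrix (Fin d) (Fin d) ℂ)) : ℝ :=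
  ⨅ n : ℕ, setOpNorm stdNorm (S ^ (n + 1)) ^ (1 / (n + 1 : ℝ))

/-- The spectral radius of a matrix: the largest modulus of an eigenvalue. -/
noncomputable def specRad {d : ℕ} (A : Matrix (Fin d) (Fin d) ℂ) : ℝ :=
  sSup ((fun μ : ℂ => ‖μ‖) '' spectrum ℂ A)

/-- `Λ(S) = sup_{s ∈ S} Λ(s)`. -/
noncomputable def lamSet {d : ℕ} (S : Set (Matrix (Fin d) (Fin d) ℂ)) : ℝ :=
  sSup (specRad '' S)

/-- Boundedness of a set of matrices. -/
def MatBdd {d : ℕ} (S : Set (Matrix (Fin d) (Fin d) ℂ)) : Prop :=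
  ∃ C : ℝ, ∀ A ∈ S, ∀ i j, ‖A i j‖ ≤ C

/-- `S` is irreducible: it preserves no nonzero proper subspace of `ℂ^d`. -/
def IsIrred {d : ℕ} (S : Set (Matrix (Fin d) (Fin d) ℂ)) : Prop :=
  ∀ W : Submodule ℂ (Fin d → ℂ), (∀ A ∈ S, ∀ x ∈ W, A.mulVec x ∈ W) → W = ⊥ ∨ W = ⊤

/-- `sup_{A ∈ S} v(Ax)` for a set of matrices `S` and vector `x`. -/
noncomputable def vecSetNorm {d : ℕ} (v : (Fin d → ℂ) → ℝ)
    (S : Set (Matrix (Fin d) (Fin d) ℂ)) (x : Fin d → ℂ) : ℝ :=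
  sSup ((fun A => v (A.mulVec x)) '' S)

/-- The Rota–Strang norm `v_r(x) = Σ_{n ≥ 0} ‖Sⁿ x‖ rⁿ` (here `S⁰ = {1}`). -/
noncomputable def rotaStrangNorm {d : ℕ} (v : (Fin d → ℂ) → ℝ)
    (S : Set (Matrix (Fin d) (Fin d) ℂ)) (r : ℝ) (x : Fin d → ℂ) : ℝ :=
  ∑' n : ℕ, vecSetNorm v (S ^ n) x * r ^ n


/-!
All norms on `ℂ^d` are equivalent, so the operator norms `‖Sⁿ‖_v` of a bounded set differ from
the reference ones by a bounded factor; together with submultiplicativity `‖Sⁿ‖_v ≤ ‖S‖_vⁿ` this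
gives `ρ(S) ≤ ‖S‖_v` for every norm `v`. Conversely, if `r ρ(S) < 1` then some `‖S^N‖ r^N < 1`,
and submultiplicativity makes `n ↦ ‖Sⁿ‖ rⁿ` summable, so `v_r` is a finite norm. Shifting its
series by one index gives `v_r(s x) ≤ r⁻¹ v_r(x)` for `s ∈ S`, i.e. `‖S‖_{v_r} ≤ r⁻¹`; letting
`r⁻¹` decrease to `ρ(S)` shows that the infimum over all norms is `ρ(S)`.
-/

open Matrix Topology

variable {d : ℕ} {v w : (Fin d → ℂ) → ℝ}

/-- A copy of `ℂ^d` whose norm is `v`, so that the equivalence of norms on finite-dimensional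
spaces applies to an arbitrary `IsCNorm`. -/
def NormedBy (_v : (Fin d → ℂ) → ℝ) : Type := Fin d → ℂ

instance : AddCommGroup (NormedBy v) := inferInstanceAs (AddCommGroup (Fin d → ℂ))
instance : Module ℂ (NormedBy v) := inferInstanceAs (Module ℂ (Fin d → ℂ))
instance : FiniteDimensional ℂ (NormedBy v) :=
  inferInstanceAs (FiniteDimensional ℂ (Fin d → ℂ))
instance : Norm (NormedBy v) := ⟨v⟩

namespace IsCNorm

lemma map_zero (hv : IsCNorm v) : v 0 = 0 := (hv.2.1 0).2 rfl

lemma normedSpaceCore (hv : IsCNorm v) : NormedSpace.Core ℂ (NormedBy v) :=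
  ⟨⟨hv.1, hv.2.2.1, hv.2.2.2⟩, hv.2.1⟩

lemma exists_le_mul (hv : IsCNorm v) (hw : IsCNorm w) : ∃ C, 0 < C ∧ ∀ x, w x ≤ C * v x := by
  let := NormedAddCommGroup.ofCore hv.normedSpaceCore
  let := NormedAddCommGroup.ofCore hw.normedSpaceCore
  let := NormedSpace.ofCore hv.normedSpaceCore
  let := NormedSpace.ofCore hw.normedSpaceCore
  let f : NormedBy v →L[ℂ] NormedBy w := LinearMap.toContinuousLinearMap LinearMap.id
  exact ⟨‖f‖ + 1, by positivity, fun x => (f.le_opNorm x).trans <|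
    mul_le_mul_of_nonneg_right (le_add_of_nonneg_right zero_le_one) (hv.1 x)⟩

end IsCNorm

lemma isCNorm_stdNorm : IsCNorm (stdNorm (d := d)) :=
  ⟨norm_nonneg, fun _ => norm_eq_zero, norm_smul, norm_add_le⟩

lemma norm_mulVec_le_of_entry_le {A : Matrix (Fin d) (Fin d) ℂ} {M : ℝ} (hM : 0 ≤ M)
    (hA : ∀ i j, ‖A i j‖ ≤ M) (x : Fin d → ℂ) : ‖A *ᵥ x‖ ≤ d * M * ‖x‖ := by
  refine (pi_norm_le_iff_of_nonneg (by positivity)).2 fun i => ?_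
  calc ‖(A *ᵥ x) i‖ ≤ ∑ j, ‖A i j‖ * ‖x j‖ := by
        simpa only [mulVec, dotProduct, norm_mul] using
          norm_sum_le Finset.univ fun j => A i j * x j
    _ ≤ ∑ _j : Fin d, M * ‖x‖ := by
        gcongr with j
        exacts [hA i j, norm_le_pi_norm x j]
    _ = d * M * ‖x‖ := by simp [mul_assoc]

lemma opNorm_le {A : Matrix (Fin d) (Fin d) ℂ} {c : ℝ} (hc : 0 ≤ c)
    (h : ∀ x, v x ≤ 1 → v (A *ᵥ x) ≤ c) : opNorm v A ≤ c :=
  Real.sSup_le (by rintro b ⟨x, hx, rfl⟩; exact h x hx) hc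

lemma opNorm_one_le : opNorm v 1 ≤ 1 :=
  opNorm_le zero_le_one fun x hx => by rwa [one_mulVec]

namespace IsCNorm

lemma exists_mulVec_le_of_entry_le (hv : IsCNorm v) :
    ∃ K, 0 ≤ K ∧ ∀ (A : Matrix (Fin d) (Fin d) ℂ) (M : ℝ), 0 ≤ M → (∀ i j, ‖A i j‖ ≤ M) →
      ∀ x, v x ≤ 1 → v (A *ᵥ x) ≤ K * M := by
  obtain ⟨C₁, hC₁, h₁⟩ := isCNorm_stdNorm.exists_le_mul hv
  obtain ⟨C₂, hC₂, h₂⟩ := hv.exists_le_mul isCNorm_stdNorm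
  refine ⟨C₁ * d * C₂, by positivity, fun A M hM hA x hx => ?_⟩
  calc v (A *ᵥ x) ≤ C₁ * ‖A *ᵥ x‖ := h₁ _
    _ ≤ C₁ * (d * M * (C₂ * 1)) := by
      gcongr
      exact (norm_mulVec_le_of_entry_le hM hA x).trans (by gcongr; exact (h₂ x).trans (by gcongr))
    _ = C₁ * d * C₂ * M := by ring

lemma opNorm_nonneg (hv : IsCNorm v) (A : Matrix (Fin d) (Fin d) ℂ) : 0 ≤ opNorm v A :=
  Real.sSup_nonneg (by rintro c ⟨x, -, rfl⟩; exact hv.1 _)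

lemma mulVec_le_opNorm (hv : IsCNorm v) (A : Matrix (Fin d) (Fin d) ℂ) (x : Fin d → ℂ) :
    v (A *ᵥ x) ≤ opNorm v A * v x := by
  obtain ⟨K, -, hKA⟩ := hv.exists_mulVec_le_of_entry_le
  obtain ⟨M, hM⟩ := (Set.finite_range fun p : Fin d × Fin d => ‖A p.1 p.2‖).bddAbove
  have hbdd : BddAbove {c : ℝ | ∃ x, v x ≤ 1 ∧ c = v (A *ᵥ x)} := by
    refine ⟨K * max M 0, ?_⟩
    rintro _ ⟨x, hx, rfl⟩
    exact hKA A _ (le_max_right _ _) (fun i j => (hM ⟨(i, j), rfl⟩).trans (le_max_left _ _)) x hx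
  rcases (hv.1 x).eq_or_lt with hx | hx
  · rw [(hv.2.1 x).1 hx.symm, mulVec_zero, hv.map_zero, mul_zero]
  · have hunit : v ((v x : ℂ)⁻¹ • x) = 1 := by
      rw [hv.2.2.1, norm_inv, Complex.norm_real, Real.norm_of_nonneg hx.le, inv_mul_cancel₀ hx.ne']
    have := le_csSup hbdd ⟨_, hunit.le, rfl⟩
    rw [mulVec_smul, hv.2.2.1, norm_inv, Complex.norm_real, Real.norm_of_nonneg hx.le] at this
    rwa [inv_mul_le_iff₀ hx, mul_comm] at this

lemma opNorm_mul_le (hv : IsCNorm v) (A B : Matrix (Fin d) (Fin d) ℂ) :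
    opNorm v (A * B) ≤ opNorm v A * opNorm v B := by
  refine opNorm_le (mul_nonneg (hv.opNorm_nonneg A) (hv.opNorm_nonneg B)) fun x hx => ?_
  rw [← mulVec_mulVec]
  calc v (A *ᵥ B *ᵥ x) ≤ opNorm v A * (opNorm v B * v x) :=
        (hv.mulVec_le_opNorm A _).trans <| by
          gcongr
          exacts [hv.opNorm_nonneg A, hv.mulVec_le_opNorm B x]
    _ ≤ opNorm v A * opNorm v B := by
        rw [← mul_assoc]
        exact mul_le_of_le_one_right (mul_nonneg (hv.opNorm_nonneg A) (hv.opNorm_nonneg B)) hx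

lemma opNorm_le_pow_of_mem_pow (hv : IsCNorm v) {S : Set (Matrix (Fin d) (Fin d) ℂ)} {M : ℝ}
    (hM : 0 ≤ M) (hS : ∀ A ∈ S, opNorm v A ≤ M) :
    ∀ (n : ℕ), ∀ A ∈ S ^ n, opNorm v A ≤ M ^ n
  | 0, A, hA => by
      rw [pow_zero, Set.mem_one] at hA
      rw [hA, pow_zero]
      exact opNorm_one_le
  | n + 1, _, hAB => by
      obtain ⟨A, hA, B, hB, rfl⟩ := Set.mem_mul.1 (pow_succ S n ▸ hAB)
      rw [pow_succ]
      exact (hv.opNorm_mul_le A B).trans <| mul_le_mul (hv.opNorm_le_pow_of_mem_pow hM hS n A hA)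
        (hS B hB) (hv.opNorm_nonneg B) (pow_nonneg hM n)

lemma exists_opNorm_le_mul (hv : IsCNorm v) (hw : IsCNorm w) :
    ∃ K, 0 < K ∧ ∀ A, opNorm w A ≤ K * opNorm v A := by
  obtain ⟨C₁, hC₁, h₁⟩ := hv.exists_le_mul hw
  obtain ⟨C₂, hC₂, h₂⟩ := hw.exists_le_mul hv
  refine ⟨C₁ * C₂, by positivity, fun A => opNorm_le (by positivity [hv.opNorm_nonneg A])
    fun x hx => ?_⟩
  calc w (A *ᵥ x) ≤ C₁ * (opNorm v A * (C₂ * w x)) := (h₁ _).trans <| by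
        gcongr
        exact (hv.mulVec_le_opNorm A x).trans (by gcongr; exacts [hv.opNorm_nonneg A, h₂ x])
    _ ≤ C₁ * C₂ * opNorm v A := by
        rw [show C₁ * (opNorm v A * (C₂ * w x)) = C₁ * C₂ * opNorm v A * w x by ring]
        exact mul_le_of_le_one_right (by positivity [hv.opNorm_nonneg A]) hx

end IsCNorm

section SetOpNorm

variable {S T U : Set (Matrix (Fin d) (Fin d) ℂ)}

lemma setOpNorm_le {c : ℝ} (hc : 0 ≤ c) (h : ∀ A ∈ T, opNorm v A ≤ c) : setOpNorm v T ≤ c :=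
  Real.sSup_le (by rintro b ⟨A, hA, rfl⟩; exact h A hA) hc

lemma IsCNorm.setOpNorm_nonneg (hv : IsCNorm v) : 0 ≤ setOpNorm v T :=
  Real.sSup_nonneg (by rintro c ⟨A, -, rfl⟩; exact hv.opNorm_nonneg A)

lemma IsCNorm.setOpNorm_mul_le (hv : IsCNorm v) (hT : BddAbove (opNorm v '' T))
    (hU : BddAbove (opNorm v '' U)) :
    setOpNorm v (T * U) ≤ setOpNorm v T * setOpNorm v U := by
  refine setOpNorm_le (mul_nonneg hv.setOpNorm_nonneg hv.setOpNorm_nonneg) ?_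
  rintro _ ⟨A, hA, B, hB, rfl⟩
  exact (hv.opNorm_mul_le A B).trans <| mul_le_mul (le_csSup hT ⟨A, hA, rfl⟩)
    (le_csSup hU ⟨B, hB, rfl⟩) (hv.opNorm_nonneg B) hv.setOpNorm_nonneg

lemma IsCNorm.exists_setOpNorm_le_mul (hv : IsCNorm v) (hw : IsCNorm w) :
    ∃ K, 0 < K ∧ ∀ T : Set (Matrix (Fin d) (Fin d) ℂ), BddAbove (opNorm v '' T) →
      setOpNorm w T ≤ K * setOpNorm v T := by
  obtain ⟨K, hK, hKA⟩ := hv.exists_opNorm_le_mul hw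
  exact ⟨K, hK, fun T hT => setOpNorm_le (mul_nonneg hK.le hv.setOpNorm_nonneg)
    fun A hA => (hKA A).trans (by gcongr; exact le_csSup hT ⟨A, hA, rfl⟩)⟩

lemma MatBdd.bddAbove_opNorm (hS : MatBdd S) (hv : IsCNorm v) :
    BddAbove (opNorm v '' S) := by
  obtain ⟨C, hC⟩ := hS
  obtain ⟨K, hK, hKA⟩ := hv.exists_mulVec_le_of_entry_le
  refine ⟨K * max C 0, ?_⟩
  rintro _ ⟨A, hA, rfl⟩
  exact opNorm_le (by positivity)
    (hKA A _ (le_max_right _ _) fun i j => (hC A hA i j).trans (le_max_left _ _))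

lemma MatBdd.opNorm_le_setOpNorm_pow (hS : MatBdd S) (hv : IsCNorm v) (n : ℕ) :
    ∀ A ∈ S ^ n, opNorm v A ≤ setOpNorm v S ^ n :=
  hv.opNorm_le_pow_of_mem_pow hv.setOpNorm_nonneg
    (fun _ hA => le_csSup (hS.bddAbove_opNorm hv) ⟨_, hA, rfl⟩) n

lemma MatBdd.bddAbove_opNorm_pow (hS : MatBdd S) (hv : IsCNorm v) (n : ℕ) :
    BddAbove (opNorm v '' (S ^ n)) := by
  refine ⟨setOpNorm v S ^ n, ?_⟩
  rintro _ ⟨A, hA, rfl⟩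
  exact hS.opNorm_le_setOpNorm_pow hv n A hA

end SetOpNorm

lemma summable_of_submultiplicative {a : ℕ → ℝ} (ha : ∀ n, 0 ≤ a n)
    (hmul : ∀ m n, a (m + n) ≤ a m * a n) {N : ℕ} (hN : 0 < N) (haN : a N < 1) :
    Summable a := by
  have : NeZero N := ⟨hN.ne'⟩
  have hdiv : ∀ q s, a (q * N + s) ≤ a N ^ q * a s := by
    intro q s
    induction q with
    | zero => simp
    | succ q ih =>
      calc a ((q + 1) * N + s) = a (N + (q * N + s)) := by ring_nf
        _ ≤ a N * (a N ^ q * a s) := (hmul _ _).trans (by gcongr; exact ha N)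
        _ = a N ^ (q + 1) * a s := by ring
  rw [← (Nat.divModEquiv N).symm.summable_iff]
  exact .of_nonneg_of_le (fun _ => ha _) (fun p => hdiv p.1 p.2) <|
    (summable_geometric_of_lt_one (ha N) haN).mul_of_nonneg (g := fun s : Fin N => a s)
      .of_finite (fun q => pow_nonneg (ha N) q) (fun s => ha s)

section JointSpectralRadius

variable {S : Set (Matrix (Fin d) (Fin d) ℂ)}

lemma jsr_nonneg : 0 ≤ jsr S :=
  Real.iInf_nonneg fun _ => Real.rpow_nonneg isCNorm_stdNorm.setOpNorm_nonneg _

lemma jsr_le_setOpNorm (hS : MatBdd S) (hv : IsCNorm v) : jsr S ≤ setOpNorm v S := by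
  obtain ⟨K, hK, hKT⟩ := hv.exists_setOpNorm_le_mul isCNorm_stdNorm
  set b := setOpNorm v S
  have hb : 0 ≤ b := hv.setOpNorm_nonneg
  have hbound (n : ℕ) : jsr S ≤ K ^ (1 / (n + 1 : ℝ)) * b := by
    have hpow : setOpNorm stdNorm (S ^ (n + 1)) ≤ K * b ^ (n + 1) :=
      (hKT _ (hS.bddAbove_opNorm_pow hv _)).trans <| by
        gcongr
        exact setOpNorm_le (by positivity) (hS.opNorm_le_setOpNorm_pow hv _)
    calc jsr S ≤ setOpNorm stdNorm (S ^ (n + 1)) ^ (1 / (n + 1 : ℝ)) :=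
          ciInf_le ⟨0, by
            rintro _ ⟨m, rfl⟩
            exact Real.rpow_nonneg isCNorm_stdNorm.setOpNorm_nonneg _⟩ n
      _ ≤ (K * b ^ (n + 1)) ^ (1 / (n + 1 : ℝ)) := by
          gcongr
          exact isCNorm_stdNorm.setOpNorm_nonneg
      _ = K ^ (1 / (n + 1 : ℝ)) * b := by
          rw [Real.mul_rpow hK.le (by positivity), one_div,
            show (n + 1 : ℝ) = ((n + 1 : ℕ) : ℝ) by push_cast; rfl,
            Real.pow_rpow_inv_natCast hb n.succ_ne_zero]
  have hlim : Tendsto (fun n : ℕ => K ^ (1 / (n + 1 : ℝ)) * b) atTop (𝓝 b) := by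
    simpa using ((Real.continuousAt_const_rpow hK.ne').tendsto.comp
      tendsto_one_div_add_atTop_nhds_zero_nat).mul_const b
  exact ge_of_tendsto hlim (.of_forall hbound)

lemma exists_setOpNorm_pow_mul_lt_one {r : ℝ} (hr : 0 < r) (hj : r * jsr S < 1) :
    ∃ N, 0 < N ∧ setOpNorm stdNorm (S ^ N) * r ^ N < 1 := by
  have hjr : jsr S < r⁻¹ := by rw [← mul_one r⁻¹, lt_inv_mul_iff₀ hr]; exact hj
  obtain ⟨n, hn⟩ := exists_lt_of_ciInf_lt hjr
  have hN : (0 : ℝ) < ((n + 1 : ℕ) : ℝ) := by positivity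
  rw [show (1 / (n + 1 : ℝ)) = ((n + 1 : ℕ) : ℝ)⁻¹ by push_cast; rw [one_div],
    Real.rpow_inv_lt_iff_of_pos isCNorm_stdNorm.setOpNorm_nonneg (by positivity) hN,
    Real.rpow_natCast, inv_pow, ← mul_one (r ^ (n + 1))⁻¹, lt_inv_mul_iff₀' (by positivity)]
    at hn
  exact ⟨n + 1, n.succ_pos, hn⟩

lemma summable_setOpNorm_pow_mul (hS : MatBdd S) {r : ℝ} (hr : 0 < r)
    (hj : r * jsr S < 1) :
    Summable fun n => setOpNorm stdNorm (S ^ n) * r ^ n := by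
  obtain ⟨N, hN, hNr⟩ := exists_setOpNorm_pow_mul_lt_one hr hj
  refine summable_of_submultiplicative (fun n => ?_) (fun m n => ?_) hN hNr
  · exact mul_nonneg isCNorm_stdNorm.setOpNorm_nonneg (pow_nonneg hr.le n)
  · calc setOpNorm stdNorm (S ^ (m + n)) * r ^ (m + n)
        ≤ setOpNorm stdNorm (S ^ m) * setOpNorm stdNorm (S ^ n) * r ^ (m + n) := by
          rw [pow_add S]
          gcongr
          exact isCNorm_stdNorm.setOpNorm_mul_le (hS.bddAbove_opNorm_pow isCNorm_stdNorm m)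
            (hS.bddAbove_opNorm_pow isCNorm_stdNorm n)
      _ = setOpNorm stdNorm (S ^ m) * r ^ m * (setOpNorm stdNorm (S ^ n) * r ^ n) := by ring

end JointSpectralRadius

section VecSetNorm

variable {S T : Set (Matrix (Fin d) (Fin d) ℂ)}

lemma IsCNorm.vecSetNorm_nonneg (hv : IsCNorm v) (x : Fin d → ℂ) : 0 ≤ vecSetNorm v T x :=
  Real.sSup_nonneg (by rintro c ⟨A, -, rfl⟩; exact hv.1 _)

lemma IsCNorm.mulVec_le_setOpNorm (hv : IsCNorm v) (hT : BddAbove (opNorm v '' T))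
    {A : Matrix (Fin d) (Fin d) ℂ} (hA : A ∈ T) (x : Fin d → ℂ) :
    v (A *ᵥ x) ≤ setOpNorm v T * v x :=
  (hv.mulVec_le_opNorm A x).trans (by gcongr; exacts [hv.1 x, le_csSup hT ⟨A, hA, rfl⟩])

lemma IsCNorm.bddAbove_mulVec (hv : IsCNorm v) (hT : BddAbove (opNorm v '' T))
    (x : Fin d → ℂ) : BddAbove ((fun A => v (A *ᵥ x)) '' T) :=
  ⟨_, by rintro _ ⟨A, hA, rfl⟩; exact hv.mulVec_le_setOpNorm hT hA x⟩

lemma IsCNorm.vecSetNorm_le (hv : IsCNorm v) (hT : BddAbove (opNorm v '' T))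
    (x : Fin d → ℂ) : vecSetNorm v T x ≤ setOpNorm v T * v x :=
  Real.sSup_le (by rintro _ ⟨A, hA, rfl⟩; exact hv.mulVec_le_setOpNorm hT hA x)
    (mul_nonneg hv.setOpNorm_nonneg (hv.1 x))

lemma vecSetNorm_one (x : Fin d → ℂ) : vecSetNorm v 1 x = v x := by
  rw [vecSetNorm, ← Set.singleton_one, Set.image_singleton, csSup_singleton, one_mulVec]

lemma IsCNorm.vecSetNorm_smul (hv : IsCNorm v) (a : ℂ) (x : Fin d → ℂ) :
    vecSetNorm v T (a • x) = ‖a‖ * vecSetNorm v T x := by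
  have himage : (fun A => v (A *ᵥ (a • x))) '' T = ‖a‖ • (fun A => v (A *ᵥ x)) '' T := by
    rw [← Set.image_smul, Set.image_image]
    exact Set.image_congr fun A _ => by rw [mulVec_smul, hv.2.2.1, smul_eq_mul]
  rw [vecSetNorm, himage, Real.sSup_smul_of_nonneg (norm_nonneg a), smul_eq_mul, vecSetNorm]

lemma IsCNorm.vecSetNorm_add_le (hv : IsCNorm v) (hT : BddAbove (opNorm v '' T))
    (x y : Fin d → ℂ) : vecSetNorm v T (x + y) ≤ vecSetNorm v T x + vecSetNorm v T y := by
  refine Real.sSup_le ?_ (add_nonneg (hv.vecSetNorm_nonneg x) (hv.vecSetNorm_nonneg y))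
  rintro _ ⟨A, hA, rfl⟩
  dsimp only
  rw [mulVec_add]
  exact (hv.2.2.2 _ _).trans (add_le_add (le_csSup (hv.bddAbove_mulVec hT x) ⟨A, hA, rfl⟩)
    (le_csSup (hv.bddAbove_mulVec hT y) ⟨A, hA, rfl⟩))

lemma IsCNorm.vecSetNorm_pow_mulVec_le (hv : IsCNorm v) (hS : MatBdd S)
    {s : Matrix (Fin d) (Fin d) ℂ} (hs : s ∈ S) (n : ℕ) (x : Fin d → ℂ) :
    vecSetNorm v (S ^ n) (s *ᵥ x) ≤ vecSetNorm v (S ^ (n + 1)) x := by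
  refine Real.sSup_le ?_ (hv.vecSetNorm_nonneg x)
  rintro _ ⟨A, hA, rfl⟩
  dsimp only
  rw [mulVec_mulVec]
  exact le_csSup (hv.bddAbove_mulVec (hS.bddAbove_opNorm_pow hv (n + 1)) x)
    ⟨A * s, by rw [pow_succ]; exact Set.mul_mem_mul hA hs, rfl⟩

end VecSetNorm

section RotaStrangNorm

variable {S : Set (Matrix (Fin d) (Fin d) ℂ)} {r : ℝ}

lemma summable_vecSetNorm_pow_mul (hS : MatBdd S) (hv : IsCNorm v) (hr : 0 < r)
    (hj : r * jsr S < 1) (x : Fin d → ℂ) :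
    Summable fun n => vecSetNorm v (S ^ n) x * r ^ n := by
  obtain ⟨K, -, hKT⟩ := isCNorm_stdNorm.exists_setOpNorm_le_mul hv
  refine .of_nonneg_of_le (fun n => mul_nonneg (hv.vecSetNorm_nonneg x) (pow_nonneg hr.le n))
    (fun n => ?_) ((summable_setOpNorm_pow_mul hS hr hj).mul_left (K * v x))
  calc vecSetNorm v (S ^ n) x * r ^ n ≤ K * setOpNorm stdNorm (S ^ n) * v x * r ^ n := by
        gcongr
        exact (hv.vecSetNorm_le (hS.bddAbove_opNorm_pow hv n) x).trans <| by
          gcongr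
          exacts [hv.1 x, hKT _ (hS.bddAbove_opNorm_pow isCNorm_stdNorm n)]
    _ = K * v x * (setOpNorm stdNorm (S ^ n) * r ^ n) := by ring

lemma isCNorm_rotaStrangNorm (hS : MatBdd S) (hv : IsCNorm v) (hr : 0 < r)
    (hj : r * jsr S < 1) : IsCNorm (rotaStrangNorm v S r) := by
  have hsum := summable_vecSetNorm_pow_mul hS hv hr hj
  have hterm (x : Fin d → ℂ) (n : ℕ) : 0 ≤ vecSetNorm v (S ^ n) x * r ^ n :=
    mul_nonneg (hv.vecSetNorm_nonneg x) (pow_nonneg hr.le n)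
  have hsmul (a : ℂ) (x : Fin d → ℂ) :
      rotaStrangNorm v S r (a • x) = ‖a‖ * rotaStrangNorm v S r x := by
    simp only [rotaStrangNorm, hv.vecSetNorm_smul, mul_assoc, tsum_mul_left]
  refine ⟨fun x => tsum_nonneg (hterm x), fun x => ⟨fun hx => ?_, fun hx => ?_⟩, hsmul,
    fun x y => ?_⟩
  · have hle : v x ≤ rotaStrangNorm v S r x := by
      simpa [rotaStrangNorm, vecSetNorm_one] using (hsum x).le_tsum 0 fun n _ => hterm x n
    exact (hv.2.1 x).1 (le_antisymm (hx ▸ hle) (hv.1 x))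
  · simpa [hx] using hsmul 0 0
  · rw [rotaStrangNorm, rotaStrangNorm, rotaStrangNorm, ← (hsum x).tsum_add (hsum y)]
    refine (hsum _).tsum_le_tsum (fun n => ?_) ((hsum x).add (hsum y))
    rw [← add_mul]
    exact mul_le_mul_of_nonneg_right (hv.vecSetNorm_add_le (hS.bddAbove_opNorm_pow hv n) x y)
      (pow_nonneg hr.le n)

lemma rotaStrangNorm_mulVec_le (hS : MatBdd S) (hv : IsCNorm v) (hr : 0 < r)
    (hj : r * jsr S < 1) {s : Matrix (Fin d) (Fin d) ℂ} (hs : s ∈ S) (x : Fin d → ℂ) :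
    rotaStrangNorm v S r (s *ᵥ x) ≤ r⁻¹ * rotaStrangNorm v S r x := by
  set f := fun n => vecSetNorm v (S ^ n) x * r ^ n
  have hf : Summable f := summable_vecSetNorm_pow_mul hS hv hr hj x
  have hshift (n : ℕ) : vecSetNorm v (S ^ (n + 1)) x * r ^ n = r⁻¹ * f (n + 1) := by
    simp only [f, pow_succ]
    field_simp
  calc rotaStrangNorm v S r (s *ᵥ x) ≤ ∑' n, r⁻¹ * f (n + 1) :=
        (summable_vecSetNorm_pow_mul hS hv hr hj _).tsum_le_tsum
          (fun n => (hshift n) ▸ mul_le_mul_of_nonneg_right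
            (hv.vecSetNorm_pow_mulVec_le hS hs n x) (pow_nonneg hr.le n))
          (((summable_nat_add_iff 1).2 hf).mul_left r⁻¹)
    _ = r⁻¹ * (rotaStrangNorm v S r x - f 0) := by
        rw [tsum_mul_left, rotaStrangNorm, hf.tsum_eq_zero_add, add_sub_cancel_left]
    _ ≤ r⁻¹ * rotaStrangNorm v S r x := by
        gcongr
        exact sub_le_self _ (mul_nonneg (hv.vecSetNorm_nonneg x) (pow_nonneg hr.le 0))

lemma setOpNorm_rotaStrangNorm_le (hS : MatBdd S) (hr : 0 < r) (hj : r * jsr S < 1) :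
    setOpNorm (rotaStrangNorm stdNorm S r) S ≤ r⁻¹ :=
  setOpNorm_le (inv_nonneg.2 hr.le) fun _ hA => opNorm_le (inv_nonneg.2 hr.le) fun x hx =>
    (rotaStrangNorm_mulVec_le hS isCNorm_stdNorm hr hj hA x).trans
      (mul_le_of_le_one_right (inv_nonneg.2 hr.le) hx)

end RotaStrangNorm

/-- Rota–Strang: `ρ(S)` is the infimum of `‖S‖` over all norms on `ℂ^d`;
moreover for every `r > 0` with `r·ρ(S) < 1` and every norm `v`, the function
`v_r(x) = Σ_n ‖Sⁿx‖rⁿ` is a norm satisfying `v_r(sx) ≤ r⁻¹ v_r(x)` for all `s ∈ S`. -/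
theorem stmt_1 {d : ℕ} (S : Set (Matrix (Fin d) (Fin d) ℂ)) (hS : MatBdd S) :
    jsr S = sInf {c : ℝ | ∃ v : (Fin d → ℂ) → ℝ, IsCNorm v ∧ c = setOpNorm v S} ∧
    ∀ r : ℝ, 0 < r → r * jsr S < 1 → ∀ v : (Fin d → ℂ) → ℝ, IsCNorm v →
      IsCNorm (rotaStrangNorm v S r) ∧
      ∀ s ∈ S, ∀ x : Fin d → ℂ,
        rotaStrangNorm v S r (s.mulVec x) ≤ r⁻¹ * rotaStrangNorm v S r x := by
  refine ⟨le_antisymm ?_ ?_, fun r hr hj v hv => ⟨isCNorm_rotaStrangNorm hS hv hr hj,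
    fun s hs x => rotaStrangNorm_mulVec_le hS hv hr hj hs x⟩⟩
  · exact le_csInf ⟨_, stdNorm, isCNorm_stdNorm, rfl⟩
      (by rintro _ ⟨v, hv, rfl⟩; exact jsr_le_setOpNorm hS hv)
  · refine le_of_forall_pos_le_add fun ε hε => ?_
    have hpos : 0 < jsr S + ε := by linarith [jsr_nonneg (S := S)]
    have hj : (jsr S + ε)⁻¹ * jsr S < 1 := by
      rw [inv_mul_lt_one₀ hpos]
      linarith
    calc sInf {c : ℝ | ∃ v : (Fin d → ℂ) → ℝ, IsCNorm v ∧ c = setOpNorm v S}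
        ≤ setOpNorm (rotaStrangNorm stdNorm S (jsr S + ε)⁻¹) S :=
          csInf_le ⟨0, by rintro _ ⟨v, hv, rfl⟩; exact hv.setOpNorm_nonneg⟩
            ⟨_, isCNorm_rotaStrangNorm hS isCNorm_stdNorm (inv_pos.2 hpos) hj, rfl⟩
      _ ≤ jsr S + ε := by simpa using setOpNorm_rotaStrangNorm_le hS (inv_pos.2 hpos) hj
end

section
/- If v is a norm on ℂ^d and ‖·‖₂ is the standard Hermitian norm, then there exists g ∈ GL_d(ℂ) such that ‖gx‖₂ ≤ v(x) ≤ √d·‖gx‖₂ for all x ∈ ℂ^d. -/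
/-!
Among the matrices `g` with `‖g x‖₂ ≤ v x` for all `x` (a compact set containing a positive
multiple of the identity) choose one maximizing `‖det g‖`. If `√d ‖g p‖₂ < v p` for some `p`, a
supporting functional of `v` at `p` gives `u` with `‖u‖₂ = 1` and `c > √d` such that
`‖u ⬝ᵥ g x‖ ≤ v x / c`. Composing `g` with the map that scales by `r` along `star u` and by `s`
on its orthogonal complement keeps it admissible as soon as `s² + (r² - s²) / c² ≤ 1`, and since
`d < c²` this leaves room for `s ^ (d - 1) * r > 1`, contradicting maximality.
-/

open scoped Pointwise
open Filter

/-- The standard Hermitian (Euclidean) norm on `ℂ^d`. -/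
noncomputable def hermNorm {d : ℕ} (x : Fin d → ℂ) : ℝ :=
  Real.sqrt (∑ i, ‖x i‖ ^ 2)

section

variable {𝕜 E : Type*} [RCLike 𝕜]

theorem Seminorm.exists_dual_apply_eq [AddCommGroup E] [Module 𝕜 E] (p : Seminorm 𝕜 E) (x : E) :
    ∃ φ : Module.Dual 𝕜 E, (∀ y, ‖φ y‖ ≤ p y) ∧ φ x = p x := by
  rcases eq_or_ne x 0 with rfl | hx
  · exact ⟨0, fun y => by simp, by simp⟩
  obtain ⟨φ, hφx, hφ⟩ := Module.Dual.exists_extension_of_le_seminorm (𝕜 ∙ x)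
    ((p x : 𝕜) • (LinearEquiv.coord 𝕜 E x hx).toLinearMap) (p := p) fun ⟨y, hy⟩ => by
      obtain ⟨a, rfl⟩ := Submodule.mem_span_singleton.mp hy
      have hcoord : LinearEquiv.coord 𝕜 E x hx ⟨a • x, hy⟩ = a :=
        (LinearEquiv.toSpanNonzeroSingleton 𝕜 E x hx).symm_apply_apply a
      simp [hcoord, map_smul_eq_mul, norm_smul, mul_comm, abs_of_nonneg (apply_nonneg p x)]
  refine ⟨φ, hφ, ?_⟩
  have := hφx ⟨x, Submodule.mem_span_singleton_self x⟩
  rwa [LinearMap.smul_apply, LinearEquiv.coe_coe, LinearEquiv.coord_self, smul_eq_mul,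
    mul_one] at this

theorem exists_pos_mul_norm_le [NormedAddCommGroup E] [NormedSpace 𝕜 E] [FiniteDimensional 𝕜 E]
    {f : E → ℝ} (hf : Continuous f) (hpos : ∀ x ≠ 0, 0 < f x)
    (hsmul : ∀ (a : 𝕜) x, f (a • x) = ‖a‖ * f x) : ∃ c > 0, ∀ x, c * ‖x‖ ≤ f x := by
  have := FiniteDimensional.proper_rclike 𝕜 E
  obtain ⟨c, hc, hcf⟩ := (isCompact_sphere (0 : E) 1).exists_forall_le' hf.continuousOn
    (a := 0) fun y hy => hpos y (ne_zero_of_mem_unit_sphere ⟨y, hy⟩)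
  refine ⟨c, hc, fun x => ?_⟩
  rcases eq_or_ne x 0 with rfl | hx
  · simp [by simpa using hsmul 0 0]
  have := hcf (((‖x‖⁻¹ : ℝ) : 𝕜) • x) (by simp [norm_smul, hx])
  rw [hsmul, RCLike.norm_ofReal, abs_inv, abs_norm] at this
  rwa [le_inv_mul_iff₀ (norm_pos_iff.mpr hx), mul_comm] at this

open scoped InnerProductSpace ComplexConjugate in
theorem norm_smul_add_inner_smul_sq [NormedAddCommGroup E] [InnerProductSpace 𝕜 E] {e : E}
    (he : ‖e‖ = 1) (s r : ℝ) (z : E) :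
    ‖(s : 𝕜) • z + (((r - s : ℝ) : 𝕜) * ⟪e, z⟫_𝕜) • e‖ ^ 2 =
      s ^ 2 * ‖z‖ ^ 2 + (r ^ 2 - s ^ 2) * ‖⟪e, z⟫_𝕜‖ ^ 2 := by
  have hinner : ⟪(s : 𝕜) • z, (((r - s : ℝ) : 𝕜) * ⟪e, z⟫_𝕜) • e⟫_𝕜 =
      ((s * (r - s) * ‖⟪e, z⟫_𝕜‖ ^ 2 : ℝ) : 𝕜) := by
    rw [inner_smul_left, inner_smul_right, ← inner_conj_symm (𝕜 := 𝕜) z e, RCLike.conj_ofReal]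
    generalize ⟪e, z⟫_𝕜 = a
    push_cast
    rw [← RCLike.mul_conj]
    ring
  rw [norm_add_sq (𝕜 := 𝕜), hinner, RCLike.ofReal_re, norm_smul, norm_smul, norm_mul, he]
  simp only [RCLike.norm_ofReal, mul_pow, sq_abs]
  ring

end

theorem exists_pow_mul_gt_one {n : ℕ} {c : ℝ} (hc : (n + 1 : ℝ) < c ^ 2) :
    ∃ s r : ℝ, 0 < s ∧ s ≤ r ∧ s ^ 2 + (r ^ 2 - s ^ 2) / c ^ 2 ≤ 1 ∧ 1 < s ^ n * r := by
  have hn : (0 : ℝ) ≤ n := n.cast_nonneg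
  have hc2 : 0 < c ^ 2 := by linarith
  -- Bernoulli gives `(1 - t) ^ n * (1 - t + t * c ^ 2) ≥ (1 - n * t) * (1 - t + t * c ^ 2)`,
  -- and for this `t` the right-hand side equals `1 + t ^ 2 * (c ^ 2 + n)`.
  set t := (c ^ 2 - (n + 1)) / (c ^ 2 * (n + 1))
  have ht : t * (c ^ 2 * (n + 1)) = c ^ 2 - (n + 1) := div_mul_cancel₀ _ (by positivity)
  have ht0 : 0 < t := div_pos (by linarith) (by positivity)
  have ht1 : t < 1 := by nlinarith [mul_pos hc2 (by positivity : (0 : ℝ) < n + 1)]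
  have hs : √(1 - t) ^ 2 = 1 - t := Real.sq_sqrt (by linarith)
  have hr : √(1 - t + t * c ^ 2) ^ 2 = 1 - t + t * c ^ 2 := Real.sq_sqrt (by nlinarith)
  have bernoulli : 1 - n * t ≤ (1 - t) ^ n := by
    simpa [sub_eq_add_neg] using one_add_mul_le_pow (a := -t) (by linarith) n
  refine ⟨√(1 - t), √(1 - t + t * c ^ 2), by simpa, Real.sqrt_le_sqrt (by nlinarith), ?_, ?_⟩
  · rw [hs, hr, add_sub_cancel_left, mul_div_cancel_right₀ _ hc2.ne', sub_add_cancel]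
  · refine lt_of_pow_lt_pow_left₀ 2 (by positivity) ?_
    rw [mul_pow, ← pow_mul, mul_comm n, pow_mul, hs, hr, one_pow]
    have key : (1 - n * t) * (1 - t + t * c ^ 2) = 1 + t ^ 2 * (c ^ 2 + n) := by
      linear_combination (-t) * ht
    calc (1 : ℝ) < (1 - n * t) * (1 - t + t * c ^ 2) := by
          rw [key]; exact lt_add_of_pos_right 1 (by positivity)
      _ ≤ (1 - t) ^ n * (1 - t + t * c ^ 2) := by gcongr

open Matrix

section HermNorm

variable {d : ℕ}

theorem hermNorm_eq_norm_toLp (x : Fin d → ℂ) :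
    hermNorm x = ‖(WithLp.toLp 2 x : EuclideanSpace ℂ (Fin d))‖ := by
  rw [EuclideanSpace.norm_eq]; rfl

theorem hermNorm_nonneg (x : Fin d → ℂ) : 0 ≤ hermNorm x := Real.sqrt_nonneg _

theorem continuous_hermNorm : Continuous (hermNorm : (Fin d → ℂ) → ℝ) := by
  simp_rw [funext hermNorm_eq_norm_toLp]
  exact continuous_norm.comp (PiLp.continuous_toLp 2 _)

theorem hermNorm_smul (a : ℂ) (x : Fin d → ℂ) : hermNorm (a • x) = ‖a‖ * hermNorm x := by
  simp only [hermNorm_eq_norm_toLp, WithLp.toLp_smul, norm_smul]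

theorem hermNorm_star (x : Fin d → ℂ) : hermNorm (star x) = hermNorm x := by
  simp [hermNorm]

theorem norm_apply_le_hermNorm (x : Fin d → ℂ) (i : Fin d) : ‖x i‖ ≤ hermNorm x := by
  simpa [hermNorm_eq_norm_toLp] using PiLp.norm_apply_le (WithLp.toLp 2 x) i

theorem dotProduct_star_self_eq_hermNorm_sq (u : Fin d → ℂ) :
    u ⬝ᵥ star u = (hermNorm u ^ 2 : ℝ) := by
  rw [hermNorm_eq_norm_toLp, ← EuclideanSpace.inner_toLp_toLp, inner_self_eq_norm_sq_to_K]
  push_cast; rfl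

theorem norm_dotProduct_le_hermNorm_mul (w y : Fin d → ℂ) :
    ‖w ⬝ᵥ y‖ ≤ hermNorm w * hermNorm y := by
  have h := norm_inner_le_norm (𝕜 := ℂ) (WithLp.toLp 2 (star w)) (WithLp.toLp 2 y)
  rwa [EuclideanSpace.inner_toLp_toLp, star_star, dotProduct_comm, ← hermNorm_eq_norm_toLp,
    ← hermNorm_eq_norm_toLp, hermNorm_star] at h

end HermNorm

namespace IsCNorm

variable {d : ℕ} {v : (Fin d → ℂ) → ℝ}

noncomputable def toSeminorm (hv : IsCNorm v) : Seminorm ℂ (Fin d → ℂ) :=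
  Seminorm.of v hv.2.2.2 hv.2.2.1

theorem pos_of_ne_zero (hv : IsCNorm v) {x : Fin d → ℂ} (hx : x ≠ 0) : 0 < v x :=
  (hv.1 x).lt_of_ne' fun h => hx ((hv.2.1 x).mp h)

theorem continuous (hv : IsCNorm v) : Continuous v := by
  have := hv.toSeminorm.convexOn.continuousOn_interior
  rw [interior_univ, continuousOn_univ] at this
  exact this

theorem exists_pos_mul_hermNorm_le (hv : IsCNorm v) : ∃ c > 0, ∀ x, c * hermNorm x ≤ v x := by
  obtain ⟨c, hc, hcv⟩ := exists_pos_mul_norm_le (𝕜 := ℂ) (E := EuclideanSpace ℂ (Fin d))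
    (f := fun x => v x.ofLp) (hv.continuous.comp (PiLp.continuous_ofLp 2 _))
    (fun x hx => hv.pos_of_ne_zero (by simpa using hx)) fun a x => hv.2.2.1 a x.ofLp
  exact ⟨c, hc, fun x => by simpa [hermNorm_eq_norm_toLp] using hcv (WithLp.toLp 2 x)⟩

end IsCNorm

section Contractions

variable {d : ℕ}

def contractions (v : (Fin d → ℂ) → ℝ) : Set (Matrix (Fin d) (Fin d) ℂ) :=
  {g | ∀ x, hermNorm (g *ᵥ x) ≤ v x}

theorem isCompact_contractions (v : (Fin d → ℂ) → ℝ) : IsCompact (contractions v) := by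
  have hclosed : IsClosed (contractions v) := by
    rw [show contractions v = ⋂ x, {g | hermNorm (g *ᵥ x) ≤ v x} by ext; simp [contractions]]
    exact isClosed_iInter fun x =>
      isClosed_le (continuous_hermNorm.comp (continuous_id.matrix_mulVec continuous_const))
        continuous_const
  refine (isCompact_univ_pi fun _ => isCompact_univ_pi fun j =>
    isCompact_closedBall (0 : ℂ) (v (Pi.single j 1))).of_isClosed_subset hclosed ?_
  intro g hg i _ j _
  simpa [mulVec, dotProduct, Pi.single_apply] using
    (norm_apply_le_hermNorm (g *ᵥ Pi.single j 1) i).trans (hg _)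

noncomputable def stretchAlong (u : Fin d → ℂ) (s r : ℝ) : Matrix (Fin d) (Fin d) ℂ :=
  (s : ℂ) • 1 + ((r - s : ℝ) : ℂ) • vecMulVec (star u) u

theorem stretchAlong_mulVec (u : Fin d → ℂ) (s r : ℝ) (y : Fin d → ℂ) :
    stretchAlong u s r *ᵥ y = (s : ℂ) • y + (((r - s : ℝ) : ℂ) * (u ⬝ᵥ y)) • star u := by
  rw [stretchAlong, add_mulVec, smul_mulVec, smul_mulVec, one_mulVec, vecMulVec_mulVec,
    op_smul_eq_smul, smul_smul]

theorem hermNorm_stretchAlong_mulVec_sq {u : Fin d → ℂ} (hu : hermNorm u = 1) (s r : ℝ)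
    (y : Fin d → ℂ) : hermNorm (stretchAlong u s r *ᵥ y) ^ 2 =
      s ^ 2 * hermNorm y ^ 2 + (r ^ 2 - s ^ 2) * ‖u ⬝ᵥ y‖ ^ 2 := by
  have hinner : u ⬝ᵥ y = inner ℂ (WithLp.toLp 2 (star u)) (WithLp.toLp 2 y) := by
    rw [EuclideanSpace.inner_toLp_toLp, star_star, dotProduct_comm]
  rw [stretchAlong_mulVec, hermNorm_eq_norm_toLp, hermNorm_eq_norm_toLp y, WithLp.toLp_add,
    WithLp.toLp_smul, WithLp.toLp_smul, hinner]
  exact norm_smul_add_inner_smul_sq (by rw [← hermNorm_eq_norm_toLp, hermNorm_star, hu]) s r _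

theorem det_stretchAlong {n : ℕ} {u : Fin (n + 1) → ℂ} (hu : hermNorm u = 1) {s : ℝ}
    (hs : s ≠ 0) (r : ℝ) : (stretchAlong u s r).det = ((s ^ n * r : ℝ) : ℂ) := by
  have hs' : (s : ℂ) ≠ 0 := Complex.ofReal_ne_zero.mpr hs
  have hfactor : stretchAlong u s r = (s : ℂ) •
      (1 + replicateCol Unit ((((r - s) / s : ℝ) : ℂ) • star u) * replicateRow Unit u) := by
    rw [stretchAlong, smul_add, replicateCol_smul, smul_mul, smul_smul, ← vecMulVec_eq]
    congr 2
    push_cast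
    rw [mul_div_cancel₀ _ hs']
  rw [hfactor, det_smul, det_one_add_replicateCol_mul_replicateRow, dotProduct_smul,
    dotProduct_star_self_eq_hermNorm_sq, hu, Fintype.card_fin]
  push_cast
  rw [smul_eq_mul, one_pow, mul_one]
  field_simp
  ring

end Contractions

section Improvement

variable {d : ℕ} {v : (Fin d → ℂ) → ℝ}

theorem stretchAlong_mul_mem_contractions (hv : ∀ x, 0 ≤ v x) {g : Matrix (Fin d) (Fin d) ℂ}
    (hg : g ∈ contractions v) {u : Fin d → ℂ} (hu : hermNorm u = 1) {c : ℝ}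
    (hug : ∀ x, ‖u ⬝ᵥ (g *ᵥ x)‖ ≤ v x / c) {s r : ℝ} (hs : 0 ≤ s) (hsr : s ≤ r)
    (hsrc : s ^ 2 + (r ^ 2 - s ^ 2) / c ^ 2 ≤ 1) : stretchAlong u s r * g ∈ contractions v := by
  intro x
  have hrs : 0 ≤ r ^ 2 - s ^ 2 := by nlinarith
  have hsq : hermNorm (stretchAlong u s r *ᵥ (g *ᵥ x)) ^ 2 ≤ v x ^ 2 := by
    calc hermNorm (stretchAlong u s r *ᵥ (g *ᵥ x)) ^ 2
        = s ^ 2 * hermNorm (g *ᵥ x) ^ 2 + (r ^ 2 - s ^ 2) * ‖u ⬝ᵥ (g *ᵥ x)‖ ^ 2 :=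
          hermNorm_stretchAlong_mulVec_sq hu s r _
      _ ≤ s ^ 2 * v x ^ 2 + (r ^ 2 - s ^ 2) * (v x / c) ^ 2 := by
          gcongr
          exacts [hermNorm_nonneg _, hg x, hug x]
      _ = (s ^ 2 + (r ^ 2 - s ^ 2) / c ^ 2) * v x ^ 2 := by ring
      _ ≤ v x ^ 2 := mul_le_of_le_one_left (sq_nonneg _) hsrc
  rw [← mulVec_mulVec]
  exact (pow_le_pow_iff_left₀ (hermNorm_nonneg _) (hv x) two_ne_zero).mp hsq

theorem exists_unit_dotProduct_mulVec_le_div (hv : IsCNorm v) {g : Matrix (Fin d) (Fin d) ℂ}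
    (hg : IsUnit g.det) {p : Fin d → ℂ} (hp : √d * hermNorm (g *ᵥ p) < v p) :
    ∃ (u : Fin d → ℂ) (c : ℝ), hermNorm u = 1 ∧ √d < c ∧ ∀ x, ‖u ⬝ᵥ (g *ᵥ x)‖ ≤ v x / c := by
  obtain ⟨φ, hφ, hφp⟩ := hv.toSeminorm.exists_dual_apply_eq p
  obtain ⟨w, hw⟩ : ∃ w : Fin d → ℂ, ∀ x, w ⬝ᵥ (g *ᵥ x) = φ x := by
    refine ⟨(dotProductEquiv ℂ (Fin d)).symm (φ ∘ₗ toLin' g⁻¹), fun x => ?_⟩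
    rw [← dotProductEquiv_apply_apply, LinearEquiv.apply_symm_apply]
    simp [mulVec_mulVec, nonsing_inv_mul _ hg]
  set c := hermNorm w
  have hvp : v p ≤ c * hermNorm (g *ᵥ p) := by
    calc v p = ‖φ p‖ := by rw [hφp]; exact (Complex.norm_of_nonneg (hv.1 p)).symm
      _ = ‖w ⬝ᵥ (g *ᵥ p)‖ := by rw [hw]
      _ ≤ c * hermNorm (g *ᵥ p) := norm_dotProduct_le_hermNorm_mul _ _
  have hcd : √d < c := by
    by_contra! h
    nlinarith [mul_le_mul_of_nonneg_right h (hermNorm_nonneg (g *ᵥ p))]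
  have hc : 0 < c := (Real.sqrt_nonneg _).trans_lt hcd
  refine ⟨((c⁻¹ : ℝ) : ℂ) • w, c, ?_, hcd, fun x => ?_⟩
  · rw [hermNorm_smul, Complex.norm_of_nonneg (inv_nonneg.mpr hc.le), inv_mul_cancel₀ hc.ne']
  · rw [smul_dotProduct, hw, norm_smul, Complex.norm_of_nonneg (inv_nonneg.mpr hc.le),
      inv_mul_eq_div]
    exact div_le_div_of_nonneg_right (hφ x) hc.le

theorem exists_mem_contractions_norm_det_gt (hv : IsCNorm v) {g : Matrix (Fin d) (Fin d) ℂ}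
    (hg : g ∈ contractions v) (hdet : IsUnit g.det) {p : Fin d → ℂ}
    (hp : √d * hermNorm (g *ᵥ p) < v p) : ∃ g' ∈ contractions v, ‖g.det‖ < ‖g'.det‖ := by
  obtain ⟨n, rfl⟩ : ∃ n, d = n + 1 := Nat.exists_eq_succ_of_ne_zero fun hd => by
    subst hd
    rw [Subsingleton.elim p 0, (hv.2.1 0).mpr rfl] at hp
    simp at hp
  obtain ⟨u, c, hu, hcd, hug⟩ := exists_unit_dotProduct_mulVec_le_div hv hdet hp
  have hc : 0 < c := (Real.sqrt_nonneg _).trans_lt hcd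
  obtain ⟨s, r, hs, hsr, hsrc, hsr1⟩ := exists_pow_mul_gt_one (n := n) (c := c) (by
    rw [Real.sqrt_lt' hc] at hcd
    exact_mod_cast hcd)
  refine ⟨stretchAlong u s r * g,
    stretchAlong_mul_mem_contractions hv.1 hg hu hug hs.le hsr hsrc, ?_⟩
  rw [det_mul, det_stretchAlong hu hs.ne', norm_mul, Complex.norm_of_nonneg (by positivity)]
  exact lt_mul_of_one_lt_left (norm_pos_iff.mpr hdet.ne_zero) hsr1

end Improvement

/-- John's ellipsoid, complex case: for every norm `v` on `ℂ^d` there is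
`g ∈ GL_d(ℂ)` with `‖gx‖₂ ≤ v(x) ≤ √d ‖gx‖₂` for all `x`. -/
theorem stmt_3 {d : ℕ} (v : (Fin d → ℂ) → ℝ) (hv : IsCNorm v) :
    ∃ g : (Matrix (Fin d) (Fin d) ℂ)ˣ, ∀ x : Fin d → ℂ,
      hermNorm ((g : Matrix (Fin d) (Fin d) ℂ).mulVec x) ≤ v x ∧
      v x ≤ Real.sqrt d * hermNorm ((g : Matrix (Fin d) (Fin d) ℂ).mulVec x) := by
  obtain ⟨c, hc, hcv⟩ := hv.exists_pos_mul_hermNorm_le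
  have hc1 : (c : ℂ) • (1 : Matrix (Fin d) (Fin d) ℂ) ∈ contractions v := fun x => by
    rw [smul_mulVec, one_mulVec, hermNorm_smul, Complex.norm_of_nonneg hc.le]
    exact hcv x
  obtain ⟨g, hg, hmax⟩ := (isCompact_contractions v).exists_isMaxOn ⟨_, hc1⟩
    (continuous_norm.comp continuous_id.matrix_det).continuousOn
  have hdet : IsUnit g.det := isUnit_iff_ne_zero.mpr fun h => by
    simpa [h, det_smul, hc.ne'] using hmax hc1
  refine ⟨((isUnit_iff_isUnit_det g).mpr hdet).unit, fun x => ⟨hg x, ?_⟩⟩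
  by_contra! hx
  obtain ⟨g', hg', hlt⟩ := exists_mem_contractions_norm_det_gt hv hg hdet hx
  exact (hmax hg').not_gt hlt
end

section
/- Let S ⊂ M_d(ℂ) be bounded irreducible with ρ(S) = 1. Then the attractor semigroup T_∞ = ⋂_{n≥1} closure(SⁿT), where T = ⋃_{n≥1}Sⁿ, contains a nonzero idempotent p (p² = p, p ≠ 0). -/
open scoped Pointwise
open Filter

/-- The semigroup `T = ⋃_{n ≥ 1} Sⁿ` generated by `S`. -/
def genSemigroup {d : ℕ} (S : Set (Matrix (Fin d) (Fin d) ℂ)) : Set (Matrix (Fin d) (Fin d) ℂ) :=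
  ⋃ n : ℕ, S ^ (n + 1)

/-- The attractor semigroup `T_∞ = ⋂_{n ≥ 1} closure(Sⁿ·T)`. -/
def attractor {d : ℕ} (S : Set (Matrix (Fin d) (Fin d) ℂ)) : Set (Matrix (Fin d) (Fin d) ℂ) :=
  ⋂ n : ℕ, closure (S ^ (n + 1) * genSemigroup S)

/-!
Irreducibility and `ρ(S) ≤ 1` make the semigroup generated by `S` bounded. Otherwise the vectors
with bounded orbit form a proper invariant subspace, hence `0`; compactness of the unit sphere
then gives, for every vector, a product of length at most `N` doubling it, so products of length
at most `kN` stretch some vector by `2ᵏ`, which is incompatible with `‖Sⁿ‖ ≤ K εⁿ` for `ε` close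
to `1`.

Since `ρ(S) ≥ 1`, every `Sⁿ` contains a product of norm `> 1/2`; boundedness turns this into a
lower bound on all its prefixes, and a diagonal limit gives an infinite word over `closure S`
whose prefix products `Pₘ` stay away from `0`. A limit `a` of `P_{φ k}` is a nonzero point of
`T_∞`, and the products `R k` of the letters between positions `φ k` and `φ (2k)`, whose length
tends to infinity, accumulate at some `q ∈ T_∞` with `a * q = a`. The Ellis–Numakura lemma in
the compact semigroup `{z ∈ T_∞ | a * z = a}` yields an idempotent `e`, nonzero since `a * e = a`.
-/

open Topology Set Metric

-- Matrices carry the operator norm of the sup norm on `Fin d → ℂ`, which is what `opNorm stdNorm`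
-- computes (`Matrix.opNorm_stdNorm_eq_norm`).
attribute [local instance] Matrix.linftyOpNormedAddCommGroup Matrix.linftyOpNormedSpace
  Matrix.linftyOpNormedRing Matrix.linftyOpNormedAlgebra

section NormedRing

variable {R : Type*} [SeminormedRing R] [NormOneClass R]

theorem norm_le_pow_of_mem_pow {s : Set R} {C : ℝ} (hC0 : 0 ≤ C) (hC : ∀ a ∈ s, ‖a‖ ≤ C) :
    ∀ {n : ℕ} {a : R}, a ∈ s ^ n → ‖a‖ ≤ C ^ n
  | 0, a, ha => by rw [Set.mem_one.1 ha, norm_one, pow_zero]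
  | n + 1, _, ha => by
    obtain ⟨b, hb, c, hc, rfl⟩ := ha
    rw [pow_succ]
    exact (norm_mul_le b c).trans
      (mul_le_mul (norm_le_pow_of_mem_pow hC0 hC hb) (hC c hc) (norm_nonneg c) (pow_nonneg hC0 n))

theorem exists_norm_le_mul_pow_of_mem_pow {s : Set R} {C ε : ℝ} {N : ℕ} (hC0 : 0 ≤ C)
    (hC : ∀ a ∈ s, ‖a‖ ≤ C) (hε : 0 < ε) (hN : 0 < N) (hsN : ∀ a ∈ s ^ N, ‖a‖ ≤ ε ^ N) :
    ∃ K, ∀ n, ∀ a ∈ s ^ n, ‖a‖ ≤ K * ε ^ n := by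
  set K : ℝ := max 1 (C / ε) ^ N
  refine ⟨K, fun n a ha => ?_⟩
  rw [← Nat.div_add_mod n N, pow_add, pow_mul] at ha
  obtain ⟨b, hb, c, hc, rfl⟩ := ha
  have hc' : ‖c‖ ≤ K * ε ^ (n % N) := calc
    ‖c‖ ≤ C ^ (n % N) := norm_le_pow_of_mem_pow hC0 hC hc
    _ = (C / ε) ^ (n % N) * ε ^ (n % N) := by rw [← mul_pow, div_mul_cancel₀ C hε.ne']
    _ ≤ max 1 (C / ε) ^ (n % N) * ε ^ (n % N) := by gcongr; exact le_max_right _ _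
    _ ≤ K * ε ^ (n % N) := by
      gcongr
      exact pow_le_pow_right₀ (le_max_left 1 (C / ε)) (Nat.mod_lt n hN).le
  calc ‖b * c‖ ≤ (ε ^ N) ^ (n / N) * (K * ε ^ (n % N)) :=
        (norm_mul_le b c).trans (mul_le_mul (norm_le_pow_of_mem_pow (by positivity) hsN hb) hc'
          (norm_nonneg c) (by positivity))
    _ = K * ε ^ n := by rw [← pow_mul, mul_left_comm, ← pow_add, Nat.div_add_mod]

end NormedRing

section Words

variable {M : Type*} [Monoid M]

def wordProd (g : ℕ → M) : ℕ → M
  | 0 => 1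
  | n + 1 => wordProd g n * g n

theorem wordProd_add (g : ℕ → M) (m : ℕ) :
    ∀ n, wordProd g (m + n) = wordProd g m * wordProd (fun i => g (m + i)) n
  | 0 => (mul_one _).symm
  | n + 1 => by
    rw [← add_assoc, wordProd, wordProd_add g m n, wordProd, mul_assoc]

theorem wordProd_mem_pow {s : Set M} {g : ℕ → M} (hg : ∀ i, g i ∈ s) :
    ∀ n, wordProd g n ∈ s ^ n
  | 0 => Set.one_mem_one
  | n + 1 => Set.mul_mem_mul (wordProd_mem_pow hg n) (hg n)

theorem exists_wordProd_eq_of_mem_pow {s : Set M} (hs : s.Nonempty) :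
    ∀ {n : ℕ} {a : M}, a ∈ s ^ n → ∃ g : ℕ → M, (∀ i, g i ∈ s) ∧ wordProd g n = a
  | 0, a, ha => ⟨fun _ => hs.some, fun _ => hs.some_mem, (Set.mem_one.1 ha).symm⟩
  | n + 1, _, ha => by
    rw [pow_succ'] at ha
    obtain ⟨b, hb, c, hc, rfl⟩ := ha
    obtain ⟨g, hg, rfl⟩ := exists_wordProd_eq_of_mem_pow hs hc
    refine ⟨fun i => if i = 0 then b else g (i - 1), fun i => ?_, ?_⟩
    · rcases i with _ | i <;> simp [hb, hg]
    · rw [add_comm, wordProd_add]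
      simp [wordProd]

variable [TopologicalSpace M] [ContinuousMul M]

theorem continuous_wordProd : ∀ n, Continuous fun g : ℕ → M => wordProd g n
  | 0 => continuous_const
  | n + 1 => (continuous_wordProd n).mul (continuous_apply n)

theorem wordProd_mem_closure_pow {s : Set M} {g : ℕ → M} (hg : ∀ i, g i ∈ closure s) :
    ∀ n, wordProd g n ∈ closure (s ^ n)
  | 0 => subset_closure Set.one_mem_one
  | n + 1 => by
    rw [pow_succ]
    exact map_mem_closure₂ (f := (· * ·)) continuous_mul (wordProd_mem_closure_pow hg n) (hg n)
      fun _ ha _ hb => Set.mul_mem_mul ha hb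

end Words

theorem MatBdd.isBounded {d : ℕ} {S : Set (Matrix (Fin d) (Fin d) ℂ)} (hS : MatBdd S) :
    Bornology.IsBounded S := by
  obtain ⟨C, hC⟩ := hS
  have hbox : IsCompact (univ.pi fun _ => univ.pi fun _ => closedBall 0 C :
      Set (Matrix (Fin d) (Fin d) ℂ)) :=
    isCompact_univ_pi fun _ => isCompact_univ_pi fun _ => isCompact_closedBall (0 : ℂ) C
  exact hbox.isBounded.subset fun A hA i _ j _ => mem_closedBall_zero_iff.2 (hC A hA i j)

namespace Matrix

variable {d : ℕ} {S : Set (Matrix (Fin d) (Fin d) ℂ)}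

theorem opNorm_stdNorm_eq_norm (A : Matrix (Fin d) (Fin d) ℂ) : opNorm stdNorm A = ‖A‖ := by
  rw [linfty_opNorm_eq_opNorm, ← ContinuousLinearMap.sSup_unitClosedBall_eq_norm]
  unfold opNorm stdNorm
  congr 1
  ext c
  simp [eq_comm]

theorem setOpNorm_stdNorm_eq (s : Set (Matrix (Fin d) (Fin d) ℂ)) :
    setOpNorm stdNorm s = sSup ((‖·‖) '' s) := by
  simp only [setOpNorm, opNorm_stdNorm_eq_norm]

theorem jsr_eq_iInf_sSup_norm (S : Set (Matrix (Fin d) (Fin d) ℂ)) :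
    jsr S = ⨅ n : ℕ, sSup ((‖·‖) '' (S ^ (n + 1))) ^ (1 / (n + 1 : ℝ)) := by
  simp only [jsr, setOpNorm_stdNorm_eq]

theorem one_le_sSup_norm_pow (hρ : 1 ≤ jsr S) (n : ℕ) : 1 ≤ sSup ((‖·‖) '' (S ^ (n + 1))) := by
  have hnonneg : ∀ k : ℕ, 0 ≤ sSup ((‖·‖) '' (S ^ k)) :=
    fun k => Real.sSup_nonneg (forall_mem_image.2 fun A _ => norm_nonneg A)
  have hbdd : BddBelow (range fun n : ℕ => sSup ((‖·‖) '' (S ^ (n + 1))) ^ (1 / (n + 1 : ℝ))) :=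
    ⟨0, forall_mem_range.2 fun n => Real.rpow_nonneg (hnonneg _) _⟩
  have h := hρ.trans ((jsr_eq_iInf_sSup_norm S).trans_le (ciInf_le hbdd n))
  rwa [one_div, Real.le_rpow_inv_iff_of_pos zero_le_one (hnonneg _) (by positivity),
    Real.one_rpow] at h

theorem exists_mem_pow_lt_norm (hρ : 1 ≤ jsr S) (n : ℕ) {r : ℝ} (hr : r < 1) :
    ∃ A ∈ S ^ (n + 1), r < ‖A‖ := by
  by_contra! h
  have hle : sSup ((‖·‖) '' (S ^ (n + 1))) ≤ max r 0 :=
    Real.sSup_le (forall_mem_image.2 fun A hA => (h A hA).trans (le_max_left r 0))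
      (le_max_right r 0)
  exact (one_le_sSup_norm_pow hρ n).not_gt (hle.trans_lt (max_lt hr one_pos))

theorem exists_norm_le_mul_pow_of_jsr_lt [Nonempty (Fin d)] (hS : Bornology.IsBounded S) {ε : ℝ}
    (hε : jsr S < ε) : ∃ K, ∀ n, ∀ A ∈ S ^ n, ‖A‖ ≤ K * ε ^ n := by
  obtain ⟨C, hC0, hC⟩ := hS.exists_pos_norm_le
  rw [jsr_eq_iInf_sSup_norm] at hε
  obtain ⟨n, hn⟩ := exists_lt_of_ciInf_lt hε
  have hnonneg : 0 ≤ sSup ((‖·‖) '' (S ^ (n + 1))) :=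
    Real.sSup_nonneg (forall_mem_image.2 fun A _ => norm_nonneg A)
  have hε0 : 0 < ε := (Real.rpow_nonneg hnonneg _).trans_lt hn
  rw [one_div, Real.rpow_inv_lt_iff_of_pos hnonneg hε0.le (by positivity),
    show ((n : ℝ) + 1) = ((n + 1 : ℕ) : ℝ) by push_cast; ring, Real.rpow_natCast] at hn
  refine exists_norm_le_mul_pow_of_mem_pow hC0.le hC hε0 n.succ_pos fun A hA => ?_
  have hbdd : BddAbove ((‖·‖) '' (S ^ (n + 1))) :=
    ⟨C ^ (n + 1), forall_mem_image.2 fun B hB => norm_le_pow_of_mem_pow hC0.le hC hB⟩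
  exact (le_csSup hbdd (mem_image_of_mem _ hA)).trans hn.le

def boundedOrbits (S : Set (Matrix (Fin d) (Fin d) ℂ)) : Submodule ℂ (Fin d → ℂ) where
  carrier := {x | ∃ C, ∀ n, ∀ A ∈ S ^ n, ‖A *ᵥ x‖ ≤ C}
  add_mem' := by
    rintro x y ⟨C₁, h₁⟩ ⟨C₂, h₂⟩
    refine ⟨C₁ + C₂, fun n A hA => ?_⟩
    rw [mulVec_add]
    exact (norm_add_le _ _).trans (add_le_add (h₁ n A hA) (h₂ n A hA))
  zero_mem' := ⟨0, fun n A _ => by simp⟩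
  smul_mem' := by
    rintro c x ⟨C, h⟩
    refine ⟨‖c‖ * C, fun n A hA => ?_⟩
    rw [mulVec_smul, norm_smul]
    exact mul_le_mul_of_nonneg_left (h n A hA) (norm_nonneg c)

theorem mulVec_mem_boundedOrbits {A : Matrix (Fin d) (Fin d) ℂ} (hA : A ∈ S) {x : Fin d → ℂ}
    (hx : x ∈ boundedOrbits S) : A *ᵥ x ∈ boundedOrbits S := by
  obtain ⟨C, hC⟩ := hx
  refine ⟨C, fun n B hB => ?_⟩
  rw [mulVec_mulVec]
  exact hC (n + 1) _ (Set.mul_mem_mul hB hA)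

theorem exists_doubling_of_boundedOrbits_eq_bot (hW : boundedOrbits S = ⊥) :
    ∃ N, ∀ x : Fin d → ℂ, ∃ n ≤ N, ∃ A ∈ S ^ n, 2 * ‖x‖ ≤ ‖A *ᵥ x‖ := by
  let U : ℕ → Set (Fin d → ℂ) := fun N => ⋃ n ≤ N, ⋃ A ∈ S ^ n, {x | 2 < ‖A *ᵥ x‖}
  have hU : ∀ N, IsOpen (U N) := fun N => isOpen_biUnion fun n _ => isOpen_biUnion fun A _ =>
    isOpen_lt continuous_const (continuous_const.matrix_mulVec continuous_id).norm
  have hUmono : Monotone U := fun N N' h =>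
    biUnion_mono (fun n hn => le_trans hn h) fun _ _ => subset_rfl
  have hcover : sphere (0 : Fin d → ℂ) 1 ⊆ ⋃ N, U N := by
    intro x hx
    have hxW : x ∉ boundedOrbits S := by
      rw [hW, Submodule.mem_bot]
      exact ne_of_mem_sphere hx one_ne_zero
    have hunb : ¬ ∃ C, ∀ n, ∀ A ∈ S ^ n, ‖A *ᵥ x‖ ≤ C := hxW
    push Not at hunb
    obtain ⟨n, A, hA, h⟩ := hunb 2
    exact mem_iUnion.2 ⟨n, mem_iUnion₂.2 ⟨n, le_rfl, mem_iUnion₂.2 ⟨A, hA, h⟩⟩⟩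
  obtain ⟨N, hN⟩ := (isCompact_sphere 0 1).elim_directed_cover U hU hcover hUmono.directed_le
  refine ⟨N, fun x => ?_⟩
  rcases eq_or_ne x 0 with rfl | hx
  · exact ⟨0, N.zero_le, 1, Set.one_mem_one, by simp⟩
  have hy : ((‖x‖⁻¹ : ℝ) : ℂ) • x ∈ sphere (0 : Fin d → ℂ) 1 := by
    simp [norm_smul, hx]
  obtain ⟨n, hn, A, hA, h⟩ : ∃ n ≤ N, ∃ A ∈ S ^ n, 2 < ‖A *ᵥ (((‖x‖⁻¹ : ℝ) : ℂ) • x)‖ := by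
    simpa [U] using hN hy
  refine ⟨n, hn, A, hA, ?_⟩
  rw [mulVec_smul, norm_smul, Complex.norm_real, Real.norm_of_nonneg (by positivity),
    lt_inv_mul_iff₀ (norm_pos_iff.2 hx)] at h
  linarith

theorem exists_pow_doubling {N : ℕ}
    (hN : ∀ x : Fin d → ℂ, ∃ n ≤ N, ∃ A ∈ S ^ n, 2 * ‖x‖ ≤ ‖A *ᵥ x‖) :
    ∀ k, ∀ x : Fin d → ℂ, ∃ n ≤ k * N, ∃ A ∈ S ^ n, 2 ^ k * ‖x‖ ≤ ‖A *ᵥ x‖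
  | 0, x => ⟨0, (zero_mul N).ge, 1, Set.one_mem_one, by simp⟩
  | k + 1, x => by
    obtain ⟨m, hm, B, hB, hBx⟩ := hN x
    obtain ⟨n, hn, A, hA, hABx⟩ := exists_pow_doubling hN k (B *ᵥ x)
    refine ⟨n + m, (Nat.add_le_add hn hm).trans_eq (Nat.succ_mul k N).symm, A * B,
      by rw [pow_add]; exact Set.mul_mem_mul hA hB, ?_⟩
    rw [← mulVec_mulVec, pow_succ, mul_assoc]
    exact (mul_le_mul_of_nonneg_left hBx (by positivity)).trans hABx

theorem eq_zero_of_boundedOrbits_eq_bot (hS : Bornology.IsBounded S) (hρ : jsr S ≤ 1)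
    (hW : boundedOrbits S = ⊥) (x : Fin d → ℂ) : x = 0 := by
  by_contra hx
  have : Nonempty (Fin d) := ⟨(Function.ne_iff.1 hx).choose⟩
  obtain ⟨N, hN⟩ := exists_doubling_of_boundedOrbits_eq_bot hW
  obtain ⟨ε, hεN, hε⟩ : ∃ ε : ℝ, ε ^ N < 2 ∧ 1 < ε :=
    ((((continuous_pow N).tendsto 1).eventually (gt_mem_nhds (by norm_num : (1 : ℝ) ^ N < 2))
      |>.filter_mono nhdsWithin_le_nhds).and self_mem_nhdsWithin).exists (f := 𝓝[>] 1)
  obtain ⟨K, hK⟩ := exists_norm_le_mul_pow_of_jsr_lt hS (hρ.trans_lt hε)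
  have hK0 : 0 ≤ K := by simpa using (norm_nonneg _).trans (hK 0 1 Set.one_mem_one)
  obtain ⟨k, hk⟩ := pow_unbounded_of_one_lt K ((one_lt_div (by positivity)).2 hεN)
  obtain ⟨n, hn, A, hA, hAx⟩ := exists_pow_doubling hN k x
  have hx0 : 0 < ‖x‖ := norm_pos_iff.2 hx
  have h2k : 2 ^ k * ‖x‖ ≤ K * (ε ^ N) ^ k * ‖x‖ := calc
    2 ^ k * ‖x‖ ≤ ‖A *ᵥ x‖ := hAx
    _ ≤ ‖A‖ * ‖x‖ := linfty_opNorm_mulVec A x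
    _ ≤ K * ε ^ n * ‖x‖ := by gcongr; exact hK n A hA
    _ ≤ K * (ε ^ N) ^ k * ‖x‖ := by
      rw [← pow_mul, mul_comm N]
      gcongr
      exact hε.le
  rw [div_pow, lt_div_iff₀ (by positivity)] at hk
  linarith [le_of_mul_le_mul_right h2k hx0]

theorem exists_norm_le_of_boundedOrbits_eq_top (hW : boundedOrbits S = ⊤) :
    ∃ C, ∀ n, ∀ A ∈ S ^ n, ‖A‖ ≤ C := by
  obtain ⟨C, hC⟩ := banach_steinhaus
    (g := fun A : {A // ∃ n, A ∈ S ^ n} => ContinuousLinearMap.mk (mulVecLin A.1)) fun x => by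
      obtain ⟨C, hC⟩ : x ∈ boundedOrbits S := hW ▸ Submodule.mem_top
      exact ⟨C, fun A => hC _ _ A.2.choose_spec⟩
  exact ⟨C, fun n A hA => (linfty_opNorm_eq_opNorm A).trans_le (hC ⟨A, n, hA⟩)⟩

theorem exists_norm_le_of_isIrred (hS : Bornology.IsBounded S) (hirr : IsIrred S)
    (hρ : jsr S ≤ 1) : ∃ C, ∀ n, ∀ A ∈ S ^ n, ‖A‖ ≤ C := by
  refine exists_norm_le_of_boundedOrbits_eq_top ?_
  rcases hirr _ fun A hA x hx => mulVec_mem_boundedOrbits hA hx with hW | hW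
  · exact hW.trans (eq_top_iff.2 fun x _ => (Submodule.mem_bot ℂ).2
      (eq_zero_of_boundedOrbits_eq_bot hS hρ hW x))
  · exact hW

end Matrix

section Attractor

variable {d : ℕ} {S : Set (Matrix (Fin d) (Fin d) ℂ)}

theorem pow_succ_subset_genSemigroup (n : ℕ) : S ^ (n + 1) ⊆ genSemigroup S :=
  subset_iUnion (fun n => S ^ (n + 1)) n

theorem genSemigroup_mul_subset : genSemigroup S * genSemigroup S ⊆ genSemigroup S := by
  rintro _ ⟨a, ha, b, hb, rfl⟩
  obtain ⟨m, ha⟩ := mem_iUnion.1 ha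
  obtain ⟨n, hb⟩ := mem_iUnion.1 hb
  refine pow_succ_subset_genSemigroup (m + n + 1) ?_
  rw [show m + n + 1 + 1 = (m + 1) + (n + 1) by ring, pow_add]
  exact Set.mul_mem_mul ha hb

theorem pow_subset_pow_mul_genSemigroup {N m : ℕ} (h : N + 2 ≤ m) :
    S ^ m ⊆ S ^ (N + 1) * genSemigroup S := by
  obtain ⟨k, rfl⟩ := Nat.exists_eq_add_of_le h
  rw [show N + 2 + k = (N + 1) + (k + 1) by ring, pow_add]
  exact Set.mul_subset_mul_left (pow_succ_subset_genSemigroup k)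

theorem isClosed_attractor : IsClosed (attractor S) :=
  isClosed_iInter fun _ => isClosed_closure

theorem mul_mem_attractor {a b : Matrix (Fin d) (Fin d) ℂ} (ha : a ∈ attractor S)
    (hb : b ∈ attractor S) : a * b ∈ attractor S := by
  refine mem_iInter.2 fun N => ?_
  have hab := map_mem_closure₂ (f := (· * ·)) continuous_mul (mem_iInter.1 ha N)
    (mem_iInter.1 hb 0) fun _ hx _ hy => Set.mul_mem_mul hx hy
  refine closure_mono ?_ hab
  rw [mul_assoc]
  refine Set.mul_subset_mul_left (Set.Subset.trans (Set.mul_subset_mul_left ?_)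
    genSemigroup_mul_subset)
  exact (Set.mul_subset_mul_right (pow_succ_subset_genSemigroup 0)).trans genSemigroup_mul_subset

theorem mem_attractor_of_tendsto {u : ℕ → Matrix (Fin d) (Fin d) ℂ} {n : ℕ → ℕ} {a}
    (hn : Tendsto n atTop atTop) (hu : ∀ k, u k ∈ closure (S ^ n k))
    (ha : Tendsto u atTop (𝓝 a)) : a ∈ attractor S :=
  mem_iInter.2 fun N => isClosed_closure.mem_of_tendsto ha <|
    (hn.eventually_ge_atTop (N + 2)).mono fun k hk =>
      closure_mono (pow_subset_pow_mul_genSemigroup hk) (hu k)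

theorem isCompact_attractor {C : ℝ} (hC : ∀ n, ∀ A ∈ S ^ n, ‖A‖ ≤ C) :
    IsCompact (attractor S) := by
  refine (isCompact_closedBall 0 C).of_isClosed_subset isClosed_attractor fun a ha => ?_
  refine closure_minimal (fun A hA => ?_) isClosed_closedBall (mem_iInter.1 ha 0)
  obtain ⟨n, hn⟩ := mem_iUnion.1 <|
    genSemigroup_mul_subset (Set.mul_subset_mul_right (pow_succ_subset_genSemigroup 0) hA)
  exact mem_closedBall_zero_iff.2 (hC _ A hn)

end Attractor

section Construction

variable {d : ℕ} {S : Set (Matrix (Fin d) (Fin d) ℂ)}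

-- The product topology of `Matrix` is not reducibly the one of the `L∞` operator norm, so
-- instance search does not derive this from the metric.
instance : FirstCountableTopology (Matrix (Fin d) (Fin d) ℂ) :=
  inferInstanceAs (FirstCountableTopology (Fin d → Fin d → ℂ))

theorem exists_wordProd_norm_ge {C : ℝ} (hC : ∀ n, ∀ A ∈ S ^ n, ‖A‖ ≤ C) (hρ : 1 ≤ jsr S) :
    ∃ c > 0, ∃ G : ℕ → Matrix (Fin d) (Fin d) ℂ,
      (∀ i, G i ∈ closure S) ∧ ∀ m, c ≤ ‖wordProd G m‖ := by
  obtain ⟨A₀, hA₀, hA₀norm⟩ := Matrix.exists_mem_pow_lt_norm hρ 0 one_half_lt_one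
  have hC0 : 0 < C := by linarith [hC _ A₀ hA₀]
  have hword : ∀ n, ∃ g : ℕ → Matrix (Fin d) (Fin d) ℂ,
      (∀ i, g i ∈ S) ∧ ∀ m ≤ n + 1, 1 / (2 * C) ≤ ‖wordProd g m‖ := by
    intro n
    obtain ⟨A, hA, hAnorm⟩ := Matrix.exists_mem_pow_lt_norm hρ n one_half_lt_one
    obtain ⟨g, hg, rfl⟩ := exists_wordProd_eq_of_mem_pow ⟨A₀, by simpa using hA₀⟩ hA
    refine ⟨g, hg, fun m hm => ?_⟩
    obtain ⟨k, hk⟩ := Nat.exists_eq_add_of_le hm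
    rw [hk, wordProd_add] at hAnorm
    have hsplit := (norm_mul_le _ _).trans (mul_le_mul_of_nonneg_left
      (hC k _ (wordProd_mem_pow (fun i => hg (m + i)) k)) (norm_nonneg (wordProd g m)))
    rw [div_le_iff₀ (by positivity)]
    linarith
  choose g hg hgnorm using hword
  obtain ⟨G, -, φ, hφ, hG⟩ :=
    (isCompact_univ_pi fun _ : ℕ => isCompact_closedBall 0 C).tendsto_subseq (x := g)
      fun n i _ => mem_closedBall_zero_iff.2 (hC 1 _ (by simpa using hg n i))
  refine ⟨1 / (2 * C), by positivity, G, fun i => ?_, fun m => ?_⟩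
  · exact mem_closure_of_tendsto (((continuous_apply i).tendsto G).comp hG)
      (Eventually.of_forall fun k => hg _ i)
  · exact ge_of_tendsto (((continuous_norm.comp (continuous_wordProd m)).tendsto G).comp hG)
      ((hφ.tendsto_atTop.eventually_ge_atTop m).mono fun k hk => hgnorm _ m (by omega))

theorem exists_ne_zero_mul_eq_self {C c : ℝ} (hC : ∀ n, ∀ A ∈ S ^ n, ‖A‖ ≤ C) (hc : 0 < c)
    {G : ℕ → Matrix (Fin d) (Fin d) ℂ} (hG : ∀ i, G i ∈ closure S)
    (hGc : ∀ m, c ≤ ‖wordProd G m‖) :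
    ∃ a ∈ attractor S, a ≠ 0 ∧ ∃ q ∈ attractor S, a * q = a := by
  have hball : ∀ n, closure (S ^ n) ⊆ closedBall 0 C := fun n =>
    closure_minimal (fun A hA => mem_closedBall_zero_iff.2 (hC n A hA)) isClosed_closedBall
  have hP : ∀ m, wordProd G m ∈ closure (S ^ m) := wordProd_mem_closure_pow hG
  obtain ⟨a, -, φ, hφ, ha⟩ := (isCompact_closedBall _ C).tendsto_subseq fun m => hball m (hP m)
  let R k := wordProd (fun i => G (φ k + i)) (φ (k + k) - φ k)
  have hgap : ∀ k, k ≤ φ (k + k) - φ k := fun k => by have := hφ.add_le_nat k k; omega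
  have hR : ∀ k, R k ∈ closure (S ^ (φ (k + k) - φ k)) :=
    fun k => wordProd_mem_closure_pow (fun i => hG _) _
  have hPR : ∀ k, wordProd G (φ (k + k)) = wordProd G (φ k) * R k := fun k => by
    rw [← wordProd_add, Nat.add_sub_cancel' (hφ.monotone (Nat.le_add_left k k))]
  obtain ⟨q, -, ψ, hψ, hq⟩ := (isCompact_closedBall _ C).tendsto_subseq fun k => hball _ (hR k)
  have hψψ : Tendsto (fun k => ψ k + ψ k) atTop atTop :=
    tendsto_atTop_mono (fun k => Nat.le_add_right _ _) hψ.tendsto_atTop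
  refine ⟨a, mem_attractor_of_tendsto hφ.tendsto_atTop (fun m => hP _) ha, ?_, q,
    mem_attractor_of_tendsto (tendsto_atTop_mono (fun k => hgap (ψ k)) hψ.tendsto_atTop)
      (fun k => hR _) hq, ?_⟩
  · rintro rfl
    have := ge_of_tendsto ha.norm (Eventually.of_forall fun k => hGc (φ k))
    rw [norm_zero] at this
    exact this.not_gt hc
  · refine tendsto_nhds_unique ?_ (ha.comp hψψ)
    exact ((ha.comp hψ.tendsto_atTop).mul hq).congr fun k => (hPR (ψ k)).symm

end Construction

/-- if `S` is bounded, irreducible and `ρ(S) = 1`, then the attractor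
semigroup `T_∞` contains a nonzero idempotent. -/
theorem stmt_8 {d : ℕ} (S : Set (Matrix (Fin d) (Fin d) ℂ)) (hS : MatBdd S)
    (hirr : IsIrred S) (hρ : jsr S = 1) :
    ∃ p ∈ attractor S, p ≠ 0 ∧ p * p = p := by
  obtain ⟨C, hC⟩ := Matrix.exists_norm_le_of_isIrred hS.isBounded hirr hρ.le
  obtain ⟨c, hc, G, hG, hGc⟩ := exists_wordProd_norm_ge hC hρ.ge
  obtain ⟨a, ha, ha0, q, hq, haq⟩ := exists_ne_zero_mul_eq_self hC hc hG hGc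
  obtain ⟨e, ⟨he, hae⟩, hee⟩ := exists_idempotent_in_compact_subsemigroup continuous_mul_const
    (attractor S ∩ {z | a * z = a}) ⟨q, hq, haq⟩
    ((isCompact_attractor hC).inter_right (isClosed_eq (continuous_const.mul continuous_id)
      continuous_const))
    fun x hx y hy => ⟨mul_mem_attractor hx.1 hy.1,
      show a * (x * y) = a by rw [← mul_assoc, hx.2, hy.2]⟩
  exact ⟨e, he, fun h => ha0 (by rw [← hae, h, mul_zero]), hee⟩
end

section
/- Let ε > 0 and A ∈ M_d(ℂ) with |trace(A^k)| ≤ ε^k for all k = 1,…,d. Then the spectral radius of A satisfies Λ(A) ≤ 2ε. -/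
open scoped Pointwise
open Filter

/-!
Let `e_k` and `p_k = trace (A ^ k)` be the elementary symmetric functions and the power sums of
the eigenvalues. Newton's identities `k e_k = ± ∑_{i<k} ± e_i p_{k-i}` give `‖e_k‖ ≤ ε ^ k` by
induction, and up to sign the `e_k` are the coefficients of the characteristic polynomial. An
eigenvalue `μ` with `‖μ‖ > 2ε` would then satisfy
`‖μ‖ ^ d ≤ ∑_{i<d} ε ^ (d - i) ‖μ‖ ^ i < ‖μ‖ ^ d ∑_{j ≥ 1} 2 ^ (-j) = ‖μ‖ ^ d`.
-/

open Finset Polynomial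

theorem Multiset.mul_esymm_eq_sum {R : Type*} [CommRing R] (s : Multiset R) (k : ℕ) :
    k * s.esymm k = (-1) ^ (k + 1) *
      ∑ i ∈ Finset.range k, (-1) ^ i * s.esymm i * (s.map (· ^ (k - i))).sum := by
  obtain ⟨l, rfl⟩ : ∃ l : List R, (l : Multiset R) = s := Quotient.exists_rep s
  have hl : (l : Multiset R) = univ.val.map l.get := by rw [Fin.univ_val_map, List.ofFn_get]
  have he (n : ℕ) : MvPolynomial.aeval l.get (MvPolynomial.esymm (Fin l.length) R n) =
      (l : Multiset R).esymm n := by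
    rw [MvPolynomial.aeval_esymm_eq_multiset_esymm, ← hl]
  have hp (n : ℕ) : MvPolynomial.aeval l.get (MvPolynomial.psum (Fin l.length) R n) =
      ((l : Multiset R).map (· ^ n)).sum := by
    rw [hl, Multiset.map_map, MvPolynomial.psum, map_sum]
    simp only [map_pow, MvPolynomial.aeval_X]
    rfl
  have newton := congrArg (MvPolynomial.aeval l.get)
    (MvPolynomial.mul_esymm_eq_sum (Fin l.length) R k)
  simp only [map_mul, map_sum, map_pow, map_neg, map_one, map_natCast, he, hp] at newton
  rw [newton, sum_filter, Nat.sum_antidiagonal_eq_sum_range_succ (fun i j => if i < k then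
      (-1) ^ i * (l : Multiset R).esymm i * ((l : Multiset R).map (· ^ j)).sum else 0),
    sum_range_succ, if_neg (lt_irrefl k), add_zero]
  exact congrArg _ (sum_congr rfl fun i hi => if_pos (mem_range.1 hi))

theorem Multiset.norm_esymm_le_of_norm_sum_map_pow_le {𝕜 : Type*} [RCLike 𝕜] {s : Multiset 𝕜}
    {ε : ℝ} {N : ℕ} (hs : ∀ n, 1 ≤ n → n ≤ N → ‖(s.map (· ^ n)).sum‖ ≤ ε ^ n) {k : ℕ}
    (hk : k ≤ N) : ‖s.esymm k‖ ≤ ε ^ k := by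
  induction k using Nat.strong_induction_on with
  | _ k ih =>
  rcases Nat.eq_zero_or_pos k with rfl | hk0
  · simp [Multiset.esymm]
  have hterm : ∀ i ∈ Finset.range k,
      ‖(-1 : 𝕜) ^ i * s.esymm i * (s.map (· ^ (k - i))).sum‖ ≤ ε ^ k := fun i hi => by
    have hik := Finset.mem_range.1 hi
    have hesymm := ih i hik (by omega)
    rw [norm_mul, norm_mul, norm_pow, norm_neg, norm_one, one_pow, one_mul,
      ← Nat.add_sub_cancel' hik.le, pow_add, Nat.add_sub_cancel_left]
    exact mul_le_mul hesymm (hs _ (by omega) (by omega)) (norm_nonneg _)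
      ((norm_nonneg _).trans hesymm)
  have hmul : (k : ℝ) * ‖s.esymm k‖ ≤ k * ε ^ k := calc
    (k : ℝ) * ‖s.esymm k‖ = ‖(k : 𝕜) * s.esymm k‖ := by rw [norm_mul, RCLike.norm_natCast]
    _ = ‖∑ i ∈ Finset.range k, (-1 : 𝕜) ^ i * s.esymm i * (s.map (· ^ (k - i))).sum‖ := by
      rw [Multiset.mul_esymm_eq_sum, norm_mul, norm_pow, norm_neg, norm_one, one_pow, one_mul]
    _ ≤ k * ε ^ k := by simpa using norm_sum_le_of_le _ hterm
  exact le_of_mul_le_mul_left hmul (by exact_mod_cast hk0)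

section CharpolyPow

variable {n K : Type*} [Fintype n] [DecidableEq n] [Field K] [IsAlgClosed K]

theorem Matrix.det_scalar_sub_smul (A : Matrix n n K) (y : K) {c : K} (hc : c ≠ 0) :
    (scalar n y - c • A).det = (A.charpoly.roots.map fun μ => y - c * μ).prod := by
  have hsplit := (IsAlgClosed.splits A.charpoly).eq_prod_roots_of_monic A.charpoly_monic
  have hcard : Multiset.card A.charpoly.roots = Fintype.card n := by
    rw [IsAlgClosed.card_roots_eq_natDegree, charpoly_natDegree_eq_dim]
  calc (scalar n y - c • A).det = (c • (scalar n (y / c) - A)).det := by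
        rw [smul_sub, scalar_apply, scalar_apply, ← diagonal_smul]
        congr; ext; simp [mul_div_cancel₀ _ hc]
    _ = c ^ Fintype.card n * A.charpoly.eval (y / c) := by rw [det_smul, eval_charpoly]
    _ = (A.charpoly.roots.map fun μ => c * (y / c - μ)).prod := by
        rw [Multiset.prod_map_mul, ← hcard, Multiset.map_const', Multiset.prod_replicate]
        conv_lhs => rw [hsplit]
        simp [eval_multiset_prod, Multiset.map_map]
    _ = (A.charpoly.roots.map fun μ => y - c * μ).prod := by
        congr 1; refine Multiset.map_congr rfl fun μ _ => ?_; field_simp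

-- Evaluate at `y ^ k` and factor `y ^ k - A ^ k = ∏ (y - ω A)` over the `k`-th roots of unity `ω`.
theorem Matrix.charpoly_pow_eq_prod_roots_pow [CharZero K] (A : Matrix n n K) {k : ℕ}
    (hk : 0 < k) :
    (A ^ k).charpoly = ((A.charpoly.roots.map (· ^ k)).map fun μ => X - C μ).prod := by
  have : NeZero k := ⟨hk.ne'⟩
  obtain ⟨ζ, hζ⟩ := HasEnoughRootsOfUnity.exists_primitiveRoot K k
  have hroot_ne_zero : ∀ ω ∈ nthRootsFinset k (1 : K), ω ≠ 0 := fun ω hω h0 => by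
    rw [h0, mem_nthRootsFinset hk, zero_pow hk.ne'] at hω
    exact zero_ne_one hω
  refine Polynomial.funext fun z => ?_
  obtain ⟨y, rfl⟩ := IsAlgClosed.exists_pow_nat_eq z hk
  have hfactor : (C (y ^ k) - X ^ k : K[X]) =
      ∏ ω ∈ nthRootsFinset k (1 : K), (C y - C ω * X) := by
    refine Polynomial.funext fun b => ?_
    simp [eval_prod, hζ.pow_sub_pow_eq_prod_sub_mul _ _ hk]
  let detAeval : K[X] →* K := detMonoidHom.comp (aeval A).toMonoidHom
  have hdetAeval (p : K[X]) : detAeval p = (aeval A p).det := rfl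
  calc (A ^ k).charpoly.eval (y ^ k) = detAeval (C (y ^ k) - X ^ k) := by
        simp [hdetAeval, eval_charpoly, algebraMap_eq_diagonal,
          scalar_apply, Pi.algebraMap_def, diagonal_pow, Pi.pow_def]
    _ = ∏ ω ∈ nthRootsFinset k (1 : K), (scalar n y - ω • A).det := by
        rw [hfactor, map_prod]
        refine prod_congr rfl fun ω _ => ?_
        simp [hdetAeval, algebraMap_eq_diagonal, scalar_apply, Pi.algebraMap_def,
          Algebra.smul_def]
    _ = ∏ ω ∈ nthRootsFinset k (1 : K), (A.charpoly.roots.map fun μ => y - ω * μ).prod :=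
        prod_congr rfl fun ω hω => A.det_scalar_sub_smul y (hroot_ne_zero ω hω)
    _ = (A.charpoly.roots.map fun μ => ∏ ω ∈ nthRootsFinset k (1 : K), (y - ω * μ)).prod :=
        Multiset.prod_map_prod_map _ _
    _ = _ := by
        simp [← hζ.pow_sub_pow_eq_prod_sub_mul _ _ hk, eval_multiset_prod, Multiset.map_map]

theorem Matrix.trace_pow_eq_sum_roots_pow [CharZero K] (A : Matrix n n K) {k : ℕ} (hk : 0 < k) :
    (A ^ k).trace = (A.charpoly.roots.map (· ^ k)).sum := by
  rw [trace_eq_sum_roots_charpoly, A.charpoly_pow_eq_prod_roots_pow hk,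
    roots_multiset_prod_X_sub_C]

end CharpolyPow

theorem sum_pow_sub_mul_pow_lt_pow {ε r : ℝ} (hε : 0 ≤ ε) (hr : 2 * ε < r) (d : ℕ) :
    ∑ i ∈ range d, ε ^ (d - i) * r ^ i < r ^ d := by
  induction d with
  | zero => simp
  | succ d ih =>
    have hr0 : 0 < r := by linarith
    calc ∑ i ∈ range (d + 1), ε ^ (d + 1 - i) * r ^ i
        = ε * ∑ i ∈ range d, ε ^ (d - i) * r ^ i + ε * r ^ d := by
          rw [sum_range_succ, mul_sum, Nat.add_sub_cancel_left, pow_one]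
          congr 1
          refine sum_congr rfl fun i hi => ?_
          rw [show d + 1 - i = d - i + 1 by have := mem_range.1 hi; omega, pow_succ]
          ring
      _ ≤ ε * r ^ d + ε * r ^ d := by gcongr
      _ < r ^ (d + 1) := by rw [pow_succ]; nlinarith [pow_pos hr0 d]

theorem Polynomial.Monic.norm_le_two_mul_of_isRoot {K : Type*} [NormedField K] {p : K[X]}
    (hp : p.Monic) {ε : ℝ} (hε : 0 ≤ ε)
    (hcoeff : ∀ i < p.natDegree, ‖p.coeff i‖ ≤ ε ^ (p.natDegree - i)) {z : K}
    (hz : p.IsRoot z) : ‖z‖ ≤ 2 * ε := by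
  by_contra! hlt
  set d := p.natDegree
  have hzd : z ^ d = -∑ i ∈ range d, p.coeff i * z ^ i := by
    have hsum := hz.eq_zero
    rw [eval_eq_sum_range, sum_range_succ, hp.coeff_natDegree, one_mul] at hsum
    exact eq_neg_of_add_eq_zero_right hsum
  have hbound : ‖z‖ ^ d ≤ ∑ i ∈ range d, ε ^ (d - i) * ‖z‖ ^ i := calc
    ‖z‖ ^ d = ‖∑ i ∈ range d, p.coeff i * z ^ i‖ := by rw [← norm_pow, hzd, norm_neg]
    _ ≤ ∑ i ∈ range d, ‖p.coeff i‖ * ‖z‖ ^ i :=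
      norm_sum_le_of_le _ fun i _ => by rw [norm_mul, norm_pow]
    _ ≤ ∑ i ∈ range d, ε ^ (d - i) * ‖z‖ ^ i :=
      sum_le_sum fun i hi => by gcongr; exact hcoeff i (mem_range.1 hi)
  exact (sum_pow_sub_mul_pow_lt_pow hε hlt d).not_ge hbound

/-- if `|trace(A^k)| ≤ ε^k` for `k = 1, …, d`, then `Λ(A) ≤ 2ε`. -/
theorem stmt_14 {d : ℕ} (ε : ℝ) (hε : 0 < ε) (A : Matrix (Fin d) (Fin d) ℂ)
    (h : ∀ k : ℕ, 1 ≤ k → k ≤ d → ‖(A ^ k).trace‖ ≤ ε ^ k) :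
    specRad A ≤ 2 * ε := by
  have hesymm (j : ℕ) (hj : j ≤ d) : ‖A.charpoly.roots.esymm j‖ ≤ ε ^ j :=
    Multiset.norm_esymm_le_of_norm_sum_map_pow_le (fun k hk hkd => by
      simpa only [A.trace_pow_eq_sum_roots_pow hk] using h k hk hkd) hj
  have hcoeff : ∀ i < A.charpoly.natDegree,
      ‖A.charpoly.coeff i‖ ≤ ε ^ (A.charpoly.natDegree - i) := fun i hi => by
    rw [coeff_eq_esymm_roots_of_card IsAlgClosed.card_roots_eq_natDegree hi.le,
      A.charpoly_monic.leadingCoeff]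
    simpa using hesymm _ (by simp)
  refine Real.sSup_le ?_ (by positivity)
  rintro _ ⟨μ, hμ, rfl⟩
  exact A.charpoly_monic.norm_le_two_mul_of_isRoot hε.le hcoeff
    (Matrix.mem_spectrum_iff_isRoot_charpoly.1 hμ)
end
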